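/- arXiv:2007.09504 — 6 statements merged into one kernel-verified Lean document; each statement's English description precedes it below -/
import Mathlib

section
/- For every x ∈ ℂ∖{z_1,…,z_n}: (i) D_1(x) = 0 as an operator on V; (ii) (2πi)^{−2}·D_2(x) = −(μ² + μ(e11−e22) − e11·e22)/4 + Σ_{s=1}^n [ (m_s(m_s+2)/4 + K_s(z,μ))/(1 − x/z_s) − (m_s(m_s+2)/4)/(1 − x/z_s)² ] as operators on V. -/
open Complex Finset

namespace Paper

noncomputable section

variable {n : ℕ}

/-- The index set of the natural basis of `V = V_{m 0} ⊗ ⋯ ⊗ V_{m (n-1)}`: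
the basis vector `v_{i_1} ⊗ ⋯ ⊗ v_{i_n}` corresponds to the index `(i_1,…,i_n)`. -/
abbrev Idx (m : Fin n → ℕ) := ∀ s : Fin n, Fin (m s + 1)

/-- The tensor product `V = V_{m 0} ⊗ ⋯ ⊗ V_{m (n-1)}` realized concretely as the space of
ℂ-valued functions on the index set of its natural basis. -/
abbrev TV (m : Fin n → ℕ) := Idx m → ℂ

/-- The linear operator `f ↦ (i ↦ c i * f (g i))`; all the basic operators below are of
this form. -/
def mulShift {ι : Type*} (c : ι → ℂ) (g : ι → ι) : Module.End ℂ (ι → ℂ) where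
  toFun f i := c i * f (g i)
  map_add' f h := by funext i; simp [mul_add]
  map_smul' a f := by
    funext i
    simp only [Pi.smul_apply, smul_eq_mul, RingHom.id_apply]
    ring

variable (m : Fin n → ℕ)

/-- `e11` acting in the `s`-th tensor factor: `e11 · v_k = ((m-2k)/2) v_k`. -/
def E11 (s : Fin n) : Module.End ℂ (TV m) :=
  mulShift (fun idx => ((m s : ℂ) - 2 * ((idx s : ℕ) : ℂ)) / 2) id

/-- `e22` acting in the `s`-th tensor factor: `e22 · v_k = -((m-2k)/2) v_k`. -/
def E22 (s : Fin n) : Module.End ℂ (TV m) :=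
  mulShift (fun idx => -(((m s : ℂ) - 2 * ((idx s : ℕ) : ℂ)) / 2)) id

/-- `e21` acting in the `s`-th tensor factor: `e21 · v_k = (k+1) v_{k+1}`. -/
def E21 (s : Fin n) : Module.End ℂ (TV m) :=
  mulShift (fun idx => ((idx s : ℕ) : ℂ)) (fun idx => Function.update idx s (idx s - 1))

/-- `e12` acting in the `s`-th tensor factor: `e12 · v_k = (m-k+1) v_{k-1}`. -/
def E12 (s : Fin n) : Module.End ℂ (TV m) :=
  mulShift (fun idx => (m s : ℂ) - ((idx s : ℕ) : ℂ)) (fun idx => Function.update idx s (idx s + 1))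

/-- The diagonal action `e11 = Σ_s e11^{(s)}` on the tensor product. -/
def e11T : Module.End ℂ (TV m) := ∑ s, E11 m s
def e22T : Module.End ℂ (TV m) := ∑ s, E22 m s
def e21T : Module.End ℂ (TV m) := ∑ s, E21 m s
def e12T : Module.End ℂ (TV m) := ∑ s, E12 m s

/-- `v ∈ V[ν]`, i.e. `(e11 - e22) v = ν v`. -/
def inWt (ν : ℤ) (v : TV m) : Prop := (e11T m - e22T m) v = ((ν : ℤ) : ℂ) • v

/-- The Weyl involution `σ`, acting by `σ v_k = (-1)^k v_{m-k}` in each factor. -/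
def sigmaOp : Module.End ℂ (TV m) :=
  mulShift (fun idx => ∏ s, (-1 : ℂ) ^ (m s - (idx s : ℕ))) (fun idx s => (idx s).rev)

/-- The weight of a basis vector: `wt(i) = Σ_s (m_s - 2 i_s)`. -/
def wt (idx : Idx m) : ℤ := ∑ s, ((m s : ℤ) - 2 * ((idx s : ℕ) : ℤ))

/-- The operator `p(κ) = Σ_{k ≥ 0} e21^k e12^k (1/k!) Π_{j=0}^{k-1} (κ + e22 - e11 - j)^{-1}`.
The operator `e22 - e11` is diagonal in the chosen basis with eigenvalue `-wt(idx)` on the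
basis vector labelled by `idx`, so the (partial) inverses `(κ + e22 - e11 - j)^{-1}` are the
diagonal operators with entries `(κ - wt(idx) - j)⁻¹`.  The sum is finite on `V` since
`e12` is nilpotent:  `e12^k = 0` for `k > M = Σ_s m_s`. -/
def pOp (κ : ℂ) : Module.End ℂ (TV m) :=
  ∑ k ∈ Finset.range ((∑ s, m s) + 1),
    (e21T m) ^ k * (e12T m) ^ k *
      mulShift (fun idx => ((k.factorial : ℂ))⁻¹ *
        ∏ j ∈ Finset.range k, (κ - ((wt m idx : ℤ) : ℂ) - (j : ℂ))⁻¹) id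

/-- The operator `𝒜(κ) = σ ∘ p(κ)`. -/
def Aop (κ : ℂ) : Module.End ℂ (TV m) := sigmaOp m * pOp m κ

/-- `Ω₀^{(s,t)} = e11^{(s)} e11^{(t)} + e22^{(s)} e22^{(t)}`. -/
def Om0 (s t : Fin n) : Module.End ℂ (TV m) := E11 m s * E11 m t + E22 m s * E22 m t

/-- `Ω₁₂^{(s,t)} = e12^{(s)} e21^{(t)}`. -/
def Om12 (s t : Fin n) : Module.End ℂ (TV m) := E12 m s * E21 m t

/-- `Ω₂₁^{(s,t)} = e21^{(s)} e12^{(t)}`. -/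
def Om21 (s t : Fin n) : Module.End ℂ (TV m) := E21 m s * E12 m t

/-- The trigonometric r-matrix `r^{(s,t)}(x) = (Ω₊ x + Ω₋)/(x-1)` acting in the `s`-th and
`t`-th tensor factors, where `Ω₊ = ½Ω₀ + Ω₁₂` and `Ω₋ = ½Ω₀ + Ω₂₁`. -/
def rOp (s t : Fin n) (x : ℂ) : Module.End ℂ (TV m) :=
  (x - 1)⁻¹ • (x • ((2 : ℂ)⁻¹ • Om0 m s t + Om12 m s t) + ((2 : ℂ)⁻¹ • Om0 m s t + Om21 m s t))

/-- The trigonometric Gaudin operators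
`K_s(z,μ) = (μ/2)(e11-e22)^{(s)} + Σ_{t ≠ s} r^{(s,t)}(z_s/z_t)`. -/
def Kop (z : Fin n → ℂ) (μ : ℂ) (s : Fin n) : Module.End ℂ (TV m) :=
  (μ / 2) • (E11 m s - E22 m s) + ∑ t ∈ Finset.univ.erase s, rOp m s t (z s / z t)

/-- The matrix entry `M₁₁(x) = 2πi Σ_s (1-x/z_s)⁻¹ e11^{(s)} - πi e11`. -/
def M11 (z : Fin n → ℂ) (x : ℂ) : Module.End ℂ (TV m) :=
  (2 * (Real.pi : ℂ) * I) • (∑ s, (1 - x / z s)⁻¹ • E11 m s) - ((Real.pi : ℂ) * I) • e11T m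

/-- `M₁₂(x) = 2πi Σ_s (1-x/z_s)⁻¹ e21^{(s)} - 2πi e21`. -/
def M12 (z : Fin n → ℂ) (x : ℂ) : Module.End ℂ (TV m) :=
  (2 * (Real.pi : ℂ) * I) • (∑ s, (1 - x / z s)⁻¹ • E21 m s) -
    (2 * (Real.pi : ℂ) * I) • e21T m

/-- `M₂₁(x) = 2πi Σ_s (1-x/z_s)⁻¹ e12^{(s)}`. -/
def M21 (z : Fin n → ℂ) (x : ℂ) : Module.End ℂ (TV m) :=
  (2 * (Real.pi : ℂ) * I) • (∑ s, (1 - x / z s)⁻¹ • E12 m s)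

/-- `M₂₂(x) = 2πi Σ_s (1-x/z_s)⁻¹ e22^{(s)} - πi e22`. -/
def M22 (z : Fin n → ℂ) (x : ℂ) : Module.End ℂ (TV m) :=
  (2 * (Real.pi : ℂ) * I) • (∑ s, (1 - x / z s)⁻¹ • E22 m s) - ((Real.pi : ℂ) * I) • e22T m

/-- The derivative `(dM₂₂/dx)(x) = 2πi Σ_s z_s⁻¹ (1-x/z_s)⁻² e22^{(s)}`. -/
def M22d (z : Fin n → ℂ) (x : ℂ) : Module.End ℂ (TV m) :=
  (2 * (Real.pi : ℂ) * I) • (∑ s, ((z s)⁻¹ * ((1 - x / z s)⁻¹) ^ 2) • E22 m s)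

/-- The coefficient `D₂(x)` of the universal differential operator
`𝒟 = cdet [[∂_u - πiμ + M₁₁, M₁₂],[M₂₁, ∂_u + πiμ + M₂₂]] = ∂_u² + D₁(x) ∂_u + D₂(x)`
(where `x = e^{-2πiu}`, `∂_u = -2πi x ∂_x`), namely
`D₂(x) = (-πiμ + M₁₁(x)) ∘ (πiμ + M₂₂(x)) - 2πi x (dM₂₂/dx)(x) - M₂₁(x) ∘ M₁₂(x)`. -/
def D2 (z : Fin n → ℂ) (μ : ℂ) (x : ℂ) : Module.End ℂ (TV m) :=
  (-(((Real.pi : ℂ) * I * μ)) • (1 : Module.End ℂ (TV m)) + M11 m z x) *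
      ((((Real.pi : ℂ) * I * μ)) • (1 : Module.End ℂ (TV m)) + M22 m z x)
    - (2 * (Real.pi : ℂ) * I * x) • M22d m z x
    - M21 m z x * M12 m z x

/-- The Bethe ansatz equations for the triple `(z; μ; V[ν])`, `ν = M - 2m'`:  `t` is a tuple
of pairwise distinct complex numbers, each nonzero and distinct from every `z_s`, with
`(1 - μ + ν/2)/t_i + Σ_{j≠i} 2/(t_i - t_j) - Σ_s m_s/(t_i - z_s) = 0` for all `i`. -/
def BAE (z : Fin n → ℂ) (μ : ℂ) {m' : ℕ} (t : Fin m' → ℂ) : Prop :=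
  Function.Injective t ∧ (∀ i, t i ≠ 0) ∧ (∀ i s, t i ≠ z s) ∧
    ∀ i, (1 - μ + ((∑ s, (m s : ℂ)) - 2 * (m' : ℂ)) / 2) / t i
        + (∑ j ∈ Finset.univ.erase i, 2 / (t i - t j))
        - ∑ s, (m s : ℂ) / (t i - z s) = 0

/-- The partial sum `ℓ_1 + ⋯ + ℓ_{s-1}` (0-based). -/
def pref (ℓv : Idx m) (s : Fin n) : ℕ :=
  ∑ u ∈ Finset.univ.filter (fun u => u < s), (ℓv u : ℕ)

/-- Extension of a tuple `t : Fin m' → ℂ` to a function on `ℕ` (by zero). -/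
def extt {m' : ℕ} (t : Fin m' → ℂ) : ℕ → ℂ := fun i => if h : i < m' then t ⟨i, h⟩ else 0

/-- The coordinate `ω_ℓ(t,z) = Σ_{ρ ∈ S_{m'}} Π_{s=1}^n Π_{i=ℓ_1+⋯+ℓ_{s-1}+1}^{ℓ_1+⋯+ℓ_s}
(t_{ρ(i)} - z_s)⁻¹` of the weight function. -/
def omegaCoeff (z : Fin n → ℂ) {m' : ℕ} (t : Fin m' → ℂ) (ℓv : Idx m) : ℂ :=
  ∑ ρ : Equiv.Perm (Fin m'), ∏ s : Fin n,
    ∏ i ∈ Finset.Ico (pref m ℓv s) (pref m ℓv s + (ℓv s : ℕ)), (extt (t ∘ ρ) i - z s)⁻¹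

/-- The Bethe vector (weight function) `ω(t,z) = Σ_{ℓ ∈ C} ω_ℓ(t,z) v_ℓ ∈ V[M - 2m']`. -/
def betheVec (z : Fin n → ℂ) {m' : ℕ} (t : Fin m' → ℂ) : TV m :=
  fun ℓv => if (∑ s, ((ℓv s : ℕ))) = m' then omegaCoeff m z t ℓv else 0

/-- The eigenvalue `k_s(t,z,μ) = (m_s/2)[(μ - ν/2 + m_s/2) + Σ_{p≠s} m_p z_s/(z_s-z_p)
+ 2 Σ_i z_s/(t_i - z_s)]`, with `ν = M - 2m'`. -/
def kEig (z : Fin n → ℂ) (μ : ℂ) {m' : ℕ} (t : Fin m' → ℂ) (s : Fin n) : ℂ :=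
  ((m s : ℂ) / 2) * ((μ - ((∑ u, (m u : ℂ)) - 2 * (m' : ℂ)) / 2 + (m s : ℂ) / 2)
    + (∑ p ∈ Finset.univ.erase s, (m p : ℂ) * z s / (z s - z p))
    + 2 * ∑ i, z s / (t i - z s))

/-- The scalar eigenvalue function `E₂(x, t, z, μ)` of `D₂(x)` on the Bethe vector, i.e.
the coefficient of the fundamental differential operator `ℰ = ∂_u² + E₂(x)`. -/
def E2fun (z : Fin n → ℂ) (μ : ℂ) {m' : ℕ} (t : Fin m' → ℂ) (x : ℂ) : ℂ :=
  (2 * (Real.pi : ℂ) * I) ^ 2 *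
    (-(μ + ((∑ u, (m u : ℂ)) - 2 * (m' : ℂ)) / 2) ^ 2 / 4
      + ∑ s, (((m s : ℂ) * ((m s : ℂ) + 2) / 4 + kEig m z μ t s) / (1 - x / z s)
          - ((m s : ℂ) * ((m s : ℂ) + 2) / 4) / (1 - x / z s) ^ 2))


/-! Since `e22 = -e11` in every factor, `M₂₂ = -M₁₁`, which is (i), and `(2πi)⁻² D₂(x)` equals
`Σ_s (w_s² - w_s) e11^{(s)} - (H - μ/2)² - (Σ_s w_s e12^{(s)}) (Σ_t (w_t - 1) e21^{(t)})` with
`w_s = (1 - x/z_s)⁻¹` and `H = Σ_s (w_s - 1/2) e11^{(s)}`.  Expanding both sides as double sums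
over pairs of sites, the diagonal terms agree by the Casimir identity
`e12 e21 = m(m+2)/4 - e11² + e11` on `V_m`, and the off-diagonal terms agree, after symmetrizing
in `s ↔ t`, by the partial-fraction identity
`w_s z_t/(z_s - z_t) + w_t z_s/(z_t - z_s) = -w_s w_t`. -/

@[simp] lemma mulShift_apply {ι : Type*} (c : ι → ℂ) (g : ι → ι) (f : ι → ℂ) (i : ι) :
    mulShift c g f i = c i * f (g i) := rfl

lemma end_ext {A B : Module.End ℂ (TV m)} (h : ∀ f idx, A f idx = B f idx) : A = B :=
  LinearMap.ext fun f => funext (h f)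

lemma E22_eq_neg (s : Fin n) : E22 m s = -E11 m s := by
  apply end_ext; intro f idx
  simp [E22, E11]

lemma e22T_eq_neg : e22T m = -e11T m := by
  simp [e22T, e11T, E22_eq_neg]

lemma E11_mul_comm (s t : Fin n) : E11 m s * E11 m t = E11 m t * E11 m s := by
  apply end_ext; intro f idx
  simp only [E11, Module.End.mul_apply, mulShift_apply, id_eq]
  ring

lemma E21_mul_E12_comm {s t : Fin n} (hst : s ≠ t) :
    E21 m s * E12 m t = E12 m t * E21 m s := by
  apply end_ext; intro f idx
  simp only [Module.End.mul_apply, E21, E12, mulShift_apply]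
  rw [Function.update_of_ne hst.symm, Function.update_of_ne hst, Function.update_comm hst]
  ring

lemma Om0_eq (s t : Fin n) : Om0 m s t = (2 : ℂ) • (E11 m s * E11 m t) := by
  apply end_ext; intro f idx
  simp only [Om0, E11, E22, LinearMap.add_apply, LinearMap.smul_apply, Module.End.mul_apply,
    mulShift_apply, Pi.add_apply, Pi.smul_apply, smul_eq_mul, id_eq]
  ring

lemma E12_mul_E21_self (s : Fin n) : E12 m s * E21 m s
    = ((m s : ℂ) * ((m s : ℂ) + 2) / 4) • 1 - E11 m s * E11 m s + E11 m s := by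
  apply end_ext; intro f idx
  simp only [Module.End.mul_apply, E12, E21, E11, mulShift_apply,
    Function.update_self, LinearMap.sub_apply, LinearMap.add_apply,
    LinearMap.smul_apply, Module.End.one_apply, Pi.smul_apply, smul_eq_mul,
    Pi.sub_apply, Pi.add_apply, Function.update_idem, id_eq]
  rcases Nat.lt_succ_iff_lt_or_eq.mp (idx s).isLt with hk | hk
  · have hval : ((idx s + 1 : Fin (m s + 1)) : ℕ) = (idx s : ℕ) + 1 := by
      rw [Fin.val_add_one_of_lt (by simpa [Fin.lt_def] using hk)]
    rw [add_sub_cancel_right, Function.update_eq_self, hval]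
    push_cast
    ring
  · rw [show ((idx s : ℕ) : ℂ) = m s by exact_mod_cast hk]
    ring

lemma x_mul_inv_mul_inv_one_sub_div_sq (a x : ℂ) :
    x * a⁻¹ * ((1 - x / a)⁻¹) ^ 2 = ((1 - x / a)⁻¹) ^ 2 - (1 - x / a)⁻¹ := by
  rcases eq_or_ne a 0 with rfl | ha
  · simp
  rcases eq_or_ne x a with rfl | hxa
  · simp [div_self ha]
  have : a - x ≠ 0 := sub_ne_zero.mpr hxa.symm
  rw [one_sub_div ha, inv_div]
  field_simp
  ring

lemma inv_one_sub_div_mul_add_inv_one_sub_div_mul {a b x : ℂ} (ha : a ≠ 0) (hb : b ≠ 0)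
    (hxa : x ≠ a) (hxb : x ≠ b) (hab : a ≠ b) :
    (1 - x / a)⁻¹ * (b / (a - b)) + (1 - x / b)⁻¹ * (a / (b - a))
      = -((1 - x / a)⁻¹ * (1 - x / b)⁻¹) := by
  have : a - b ≠ 0 := sub_ne_zero.mpr hab
  have : b - a ≠ 0 := sub_ne_zero.mpr hab.symm
  have : a - x ≠ 0 := sub_ne_zero.mpr hxa.symm
  have : b - x ≠ 0 := sub_ne_zero.mpr hxb.symm
  rw [one_sub_div ha, one_sub_div hb, inv_div, inv_div]
  field_simp
  ring

section OffDiagonalSums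

variable {ι M : Type*} [Fintype ι] [DecidableEq ι] [AddCommGroup M]

lemma sum_sum_erase_comm (F : ι → ι → M) :
    ∑ s, ∑ t ∈ univ.erase s, F s t = ∑ s, ∑ t ∈ univ.erase s, F t s :=
  Finset.sum_comm' fun _ _ => by simp [ne_comm]

lemma sum_sum_eq_sum_add_sum_sum_erase (F : ι → ι → M) :
    ∑ s, ∑ t, F s t = ∑ s, F s s + ∑ s, ∑ t ∈ univ.erase s, F s t := by
  rw [← Finset.sum_add_distrib]
  exact Finset.sum_congr rfl fun s _ => (Finset.add_sum_erase _ _ (Finset.mem_univ s)).symm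

lemma sum_sum_erase_smul_congr_of_symm [Module ℂ M] {X : ι → ι → M} (hX : ∀ s t, X s t = X t s)
    {a b : ι → ι → ℂ} (hab : ∀ s t, s ≠ t → a s t + a t s = b s t + b t s) :
    ∑ s, ∑ t ∈ univ.erase s, a s t • X s t = ∑ s, ∑ t ∈ univ.erase s, b s t • X s t := by
  set S := ∑ s, ∑ t ∈ univ.erase s, (a s t - b s t) • X s t
  have hS : S = -S := by
    calc S = ∑ s, ∑ t ∈ univ.erase s, (a t s - b t s) • X t s := sum_sum_erase_comm _
      _ = -S := by
        simp only [S, ← Finset.sum_neg_distrib, ← neg_smul]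
        refine Finset.sum_congr rfl fun s _ => Finset.sum_congr rfl fun t ht => ?_
        rw [hX t s]
        congr 1
        linear_combination hab s t (Finset.ne_of_mem_erase ht).symm
  have : S = 0 := by
    have h2 : (2 : ℂ) • S = 0 := by rw [two_smul]; nth_rw 1 [hS]; exact neg_add_cancel S
    exact (smul_eq_zero.mp h2).resolve_left two_ne_zero
  simp only [S, sub_smul, Finset.sum_sub_distrib, sub_eq_zero] at this
  exact this

end OffDiagonalSums

def cartanSum (w : Fin n → ℂ) : Module.End ℂ (TV m) := ∑ s, (w s - 2⁻¹) • E11 m s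

lemma M11_eq (z : Fin n → ℂ) (x : ℂ) :
    M11 m z x = (2 * (Real.pi : ℂ) * I) • cartanSum m (fun s => (1 - x / z s)⁻¹) := by
  simp only [M11, cartanSum, e11T, Finset.smul_sum, ← Finset.sum_sub_distrib]
  refine Finset.sum_congr rfl fun s _ => ?_
  module

lemma M22_eq_neg (z : Fin n → ℂ) (x : ℂ) : M22 m z x = -M11 m z x := by
  simp only [M22, M11, e22T_eq_neg, E22_eq_neg, smul_neg, Finset.sum_neg_distrib]
  module

lemma M12_eq (z : Fin n → ℂ) (x : ℂ) :
    M12 m z x = (2 * (Real.pi : ℂ) * I) • ∑ s, ((1 - x / z s)⁻¹ - 1) • E21 m s := by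
  simp only [M12, e21T, Finset.smul_sum, ← Finset.sum_sub_distrib]
  refine Finset.sum_congr rfl fun s _ => ?_
  module

lemma smul_M22d_eq (z : Fin n → ℂ) (x : ℂ) :
    (2 * (Real.pi : ℂ) * I * x) • M22d m z x
      = -((2 * (Real.pi : ℂ) * I) ^ 2 •
          ∑ s, (((1 - x / z s)⁻¹) ^ 2 - (1 - x / z s)⁻¹) • E11 m s) := by
  simp only [M22d, smul_smul, Finset.smul_sum, ← Finset.sum_neg_distrib, E22_eq_neg]
  refine Finset.sum_congr rfl fun s _ => ?_
  rw [← x_mul_inv_mul_inv_one_sub_div_sq (z s) x]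
  module

def normalizedD2 (w : Fin n → ℂ) (μ : ℂ) : Module.End ℂ (TV m) :=
  ∑ s, (w s ^ 2 - w s) • E11 m s
    - (cartanSum m w - (μ / 2) • 1) * (cartanSum m w - (μ / 2) • 1)
    - (∑ s, w s • E12 m s) * ∑ s, (w s - 1) • E21 m s

lemma D2_eq (z : Fin n → ℂ) (μ x : ℂ) :
    D2 m z μ x = (2 * (Real.pi : ℂ) * I) ^ 2 • normalizedD2 m (fun s => (1 - x / z s)⁻¹) μ := by
  have h11 : -((Real.pi : ℂ) * I * μ) • (1 : Module.End ℂ (TV m)) + M11 m z x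
      = (2 * (Real.pi : ℂ) * I) • (cartanSum m (fun s => (1 - x / z s)⁻¹) - (μ / 2) • 1) := by
    rw [M11_eq]; module
  have h22 : ((Real.pi : ℂ) * I * μ) • (1 : Module.End ℂ (TV m)) + M22 m z x
      = (-(2 * (Real.pi : ℂ) * I)) • (cartanSum m (fun s => (1 - x / z s)⁻¹) - (μ / 2) • 1) := by
    rw [M22_eq_neg, M11_eq]; module
  rw [D2, h11, h22, smul_M22d_eq, M21, M12_eq, normalizedD2]
  simp only [smul_mul_smul_comm]
  module

def pairTerm (w : Fin n → ℂ) (s t : Fin n) : Module.End ℂ (TV m) :=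
  ((w s - 2⁻¹) * (w t - 2⁻¹)) • (E11 m s * E11 m t) + (w s * (w t - 1)) • (E12 m s * E21 m t)

lemma cartanSum_mul_self_add (w : Fin n → ℂ) :
    cartanSum m w * cartanSum m w + (∑ s, w s • E12 m s) * ∑ s, (w s - 1) • E21 m s
      = ∑ s, ∑ t, pairTerm m w s t := by
  simp only [cartanSum, Finset.sum_mul_sum, smul_mul_smul_comm, pairTerm, Finset.sum_add_distrib]

lemma pairTerm_self (w : Fin n → ℂ) (s : Fin n) :
    pairTerm m w s s = (4 : ℂ)⁻¹ • (E11 m s * E11 m s)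
      + (w s ^ 2 - w s) • (((m s : ℂ) * ((m s : ℂ) + 2) / 4) • 1 + E11 m s) := by
  rw [pairTerm, E12_mul_E21_self]
  module

lemma rOp_eq {z : Fin n → ℂ} {s t : Fin n} (hst : s ≠ t) (ht : z t ≠ 0) (hzst : z s ≠ z t) :
    rOp m s t (z s / z t)
      = (1 + 2 * (z t / (z s - z t))) • (E11 m s * E11 m t)
        + (1 + z t / (z s - z t)) • (E12 m s * E21 m t)
        + (z t / (z s - z t)) • (E12 m t * E21 m s) := by
  have : z s - z t ≠ 0 := sub_ne_zero.mpr hzst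
  have hinv : (z s / z t - 1)⁻¹ = z t / (z s - z t) := by field_simp
  rw [rOp, Om0_eq, Om12, Om21, E21_mul_E12_comm m hst, hinv]
  match_scalars <;> field_simp <;> ring

lemma Kop_eq (z : Fin n → ℂ) (μ : ℂ) (s : Fin n) :
    Kop m z μ s = μ • E11 m s + ∑ t ∈ univ.erase s, rOp m s t (z s / z t) := by
  rw [Kop, E22_eq_neg]
  module

lemma sum_smul_sum_erase_rOp {z : Fin n → ℂ} (hz0 : ∀ s, z s ≠ 0) (hz : Function.Injective z)
    {w : Fin n → ℂ}
    (hw : ∀ s t, s ≠ t → w s * (z t / (z s - z t)) + w t * (z s / (z t - z s)) = -(w s * w t)) :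
    ∑ s, w s • ∑ t ∈ univ.erase s, rOp m s t (z s / z t)
      = ∑ s, ∑ t ∈ univ.erase s, ((4 : ℂ)⁻¹ • (E11 m s * E11 m t) - pairTerm m w s t) := by
  have hexpand : ∑ s, w s • ∑ t ∈ univ.erase s, rOp m s t (z s / z t)
      = ∑ s, ∑ t ∈ univ.erase s, (w s * (1 + 2 * (z t / (z s - z t)))) • (E11 m s * E11 m t)
        + ∑ s, ∑ t ∈ univ.erase s, (w s * (1 + z t / (z s - z t))) • (E12 m s * E21 m t)
        + ∑ s, ∑ t ∈ univ.erase s, (w s * (z t / (z s - z t))) • (E12 m t * E21 m s) := by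
    simp only [Finset.smul_sum, ← Finset.sum_add_distrib]
    refine Finset.sum_congr rfl fun s _ => Finset.sum_congr rfl fun t ht => ?_
    have hts := Finset.ne_of_mem_erase ht
    rw [rOp_eq m hts.symm (hz0 t) (hz.ne hts.symm)]
    module
  have hG : ∑ s, ∑ t ∈ univ.erase s, (w s * (1 + 2 * (z t / (z s - z t)))) • (E11 m s * E11 m t)
      = ∑ s, ∑ t ∈ univ.erase s, ((4 : ℂ)⁻¹ - (w s - 2⁻¹) * (w t - 2⁻¹)) • (E11 m s * E11 m t) :=
    sum_sum_erase_smul_congr_of_symm (E11_mul_comm m) fun s t hst => by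
      linear_combination 2 * hw s t hst
  rw [hexpand, hG, sum_sum_erase_comm fun s t => (w s * (z t / (z s - z t))) • (E12 m t * E21 m s)]
  simp only [← Finset.sum_add_distrib]
  refine Finset.sum_congr rfl fun s _ => Finset.sum_congr rfl fun t ht => ?_
  rw [pairTerm]
  match_scalars
  · ring
  · linear_combination hw s t (Finset.ne_of_mem_erase ht).symm

lemma sub_smul_one_mul_self {A : Type*} [Ring A] [Algebra ℂ A] (a : A) (c : ℂ) :
    (a - c • 1) * (a - c • 1) = a * a - (2 * c) • a + c ^ 2 • 1 := by
  simp only [sub_mul, mul_sub, smul_mul_assoc, mul_smul_comm, one_mul, mul_one]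
  module

lemma normalizedD2_eq {z : Fin n → ℂ} (hz0 : ∀ s, z s ≠ 0) (hz : Function.Injective z)
    {w : Fin n → ℂ}
    (hw : ∀ s t, s ≠ t → w s * (z t / (z s - z t)) + w t * (z s / (z t - z s)) = -(w s * w t))
    (μ : ℂ) :
    normalizedD2 m w μ
      = -(4 : ℂ)⁻¹ • (μ ^ 2 • (1 : Module.End ℂ (TV m)) + μ • (e11T m - e22T m)
            - e11T m * e22T m)
        + ∑ s, (w s • (((m s : ℂ) * ((m s : ℂ) + 2) / 4) • (1 : Module.End ℂ (TV m))
              + Kop m z μ s)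
            - (w s ^ 2 * ((m s : ℂ) * ((m s : ℂ) + 2) / 4)) • (1 : Module.End ℂ (TV m))) := by
  have hsquare := cartanSum_mul_self_add m w
  rw [sum_sum_eq_sum_add_sum_sum_erase] at hsquare
  have he11 : e11T m * e11T m = ∑ s, E11 m s * E11 m s
      + ∑ s, ∑ t ∈ univ.erase s, E11 m s * E11 m t := by
    rw [e11T, Finset.sum_mul_sum, sum_sum_eq_sum_add_sum_sum_erase]
  have hK : ∑ s, (w s • (((m s : ℂ) * ((m s : ℂ) + 2) / 4) • (1 : Module.End ℂ (TV m))
              + Kop m z μ s)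
            - (w s ^ 2 * ((m s : ℂ) * ((m s : ℂ) + 2) / 4)) • (1 : Module.End ℂ (TV m)))
      = ∑ s, ((w s - w s ^ 2) * ((m s : ℂ) * ((m s : ℂ) + 2) / 4)) • (1 : Module.End ℂ (TV m))
        + ∑ s, (μ * w s) • E11 m s
        + ∑ s, w s • ∑ t ∈ univ.erase s, rOp m s t (z s / z t) := by
    simp only [Kop_eq, ← Finset.sum_add_distrib]
    refine Finset.sum_congr rfl fun s _ => ?_
    module
  have hdiag : ∑ s, pairTerm m w s s
      = (4 : ℂ)⁻¹ • ∑ s, E11 m s * E11 m s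
        - ∑ s, ((w s - w s ^ 2) * ((m s : ℂ) * ((m s : ℂ) + 2) / 4)) • (1 : Module.End ℂ (TV m))
        + ∑ s, (w s ^ 2 - w s) • E11 m s := by
    simp only [pairTerm_self, Finset.smul_sum, ← Finset.sum_add_distrib, ← Finset.sum_sub_distrib]
    refine Finset.sum_congr rfl fun s _ => ?_
    module
  have hcartan : μ • cartanSum m w = ∑ s, (μ * w s) • E11 m s - (μ / 2) • e11T m := by
    simp only [cartanSum, e11T, Finset.smul_sum, ← Finset.sum_sub_distrib]
    refine Finset.sum_congr rfl fun s _ => ?_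
    module
  have he22 : e22T m = (-1 : ℂ) • e11T m := by rw [e22T_eq_neg]; module
  rw [normalizedD2, sub_smul_one_mul_self, hK, sum_smul_sum_erase_rOp m hz0 hz hw, he22,
    mul_smul_comm, mul_div_cancel₀ μ two_ne_zero]
  simp only [Finset.sum_sub_distrib, ← Finset.smul_sum]
  linear_combination (norm := module) (-1 : ℂ) • hsquare - hdiag + hcartan + (4 : ℂ)⁻¹ • he11

theorem statement1_general
    (n : ℕ) (m : Fin n → ℕ)
    (z : Fin n → ℂ) (hz0 : ∀ s, z s ≠ 0) (hz : Function.Injective z)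
    (μ : ℂ) (x : ℂ) (hx : ∀ s, x ≠ z s) :
    M11 m z x + M22 m z x = 0 ∧
    ((2 * (Real.pi : ℂ) * Complex.I) ^ 2)⁻¹ • D2 m z μ x
      = -(4 : ℂ)⁻¹ • (μ ^ 2 • (1 : Module.End ℂ (TV m)) + μ • (e11T m - e22T m)
            - e11T m * e22T m)
        + ∑ s, ((1 - x / z s)⁻¹ • (((m s : ℂ) * ((m s : ℂ) + 2) / 4) • (1 : Module.End ℂ (TV m))
              + Kop m z μ s)
            - (((1 - x / z s)⁻¹) ^ 2 * ((m s : ℂ) * ((m s : ℂ) + 2) / 4)) •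
              (1 : Module.End ℂ (TV m))) := by
  refine ⟨by rw [M22_eq_neg, add_neg_cancel], ?_⟩
  have h2πi : (2 * (Real.pi : ℂ) * I) ^ 2 ≠ 0 := by simp [Real.pi_ne_zero, I_ne_zero]
  rw [D2_eq, inv_smul_smul₀ h2πi]
  exact normalizedD2_eq m hz0 hz (fun s t hst => inv_one_sub_div_mul_add_inv_one_sub_div_mul
    (hz0 s) (hz0 t) (hx s) (hx t) (hz.ne hst)) μ

/-- Theorem 4.1 of the paper.  For every `x ∈ ℂ∖{z_1,…,z_n}`:
(i) `D₁(x) = M₁₁(x) + M₂₂(x) = 0` on `V`, and (ii)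
`(2πi)⁻² D₂(x) = -(μ² + μ(e11-e22) - e11 e22)/4
+ Σ_s [ (m_s(m_s+2)/4 + K_s(z,μ))/(1-x/z_s) - (m_s(m_s+2)/4)/(1-x/z_s)² ]` on `V`. -/
theorem statement1
    (n : ℕ) (hn : 1 < n) (m : Fin n → ℕ) (hm : ∀ s, 0 < m s)
    (z : Fin n → ℂ) (hz0 : ∀ s, z s ≠ 0) (hz : Function.Injective z)
    (μ : ℂ) (x : ℂ) (hx : ∀ s, x ≠ z s) :
    M11 m z x + M22 m z x = 0 ∧
    ((2 * (Real.pi : ℂ) * Complex.I) ^ 2)⁻¹ • D2 m z μ x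
      = -(4 : ℂ)⁻¹ • (μ ^ 2 • (1 : Module.End ℂ (TV m)) + μ • (e11T m - e22T m)
            - e11T m * e22T m)
        + ∑ s, ((1 - x / z s)⁻¹ • (((m s : ℂ) * ((m s : ℂ) + 2) / 4) • (1 : Module.End ℂ (TV m))
              + Kop m z μ s)
            - (((1 - x / z s)⁻¹) ^ 2 * ((m s : ℂ) * ((m s : ℂ) + 2) / 4)) •
              (1 : Module.End ℂ (TV m))) :=
  statement1_general n m z hz0 hz μ x hx

end
end Paper
end

section
/- Let t⁰ = (t⁰_1,…,t⁰_m) be a solution of the Bethe ansatz equations for the triple (z; μ; V[ν]), ν = M − 2m. Define g(x) = −(μ+ν/2)/2 + Σ_{i=1}^m t⁰_i/(x − t⁰_i) − (1/2)·Σ_{s=1}^n m_s·z_s/(x − z_s). Then for every x ∈ ℂ with x ∉ {t⁰_1,…,t⁰_m, z_1,…,z_n}: −(μ+ν/2)²/4 + Σ_{s=1}^n [ (m_s(m_s+2)/4 + k_s(t⁰,z,μ))/(1 − x/z_s) − (m_s(m_s+2)/4)/(1 − x/z_s)² ] = −x·g′(x) − g(x)², where g′(x) = −Σ_{i=1}^m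 t⁰_i/(x − t⁰_i)² + (1/2)·Σ_{s=1}^n m_s·z_s/(x − z_s)² and k_s(t⁰,z,μ) = (m_s/2)·[(μ − ν/2 + m_s/2) + Σ_{p≠s} m_p·z_s/(z_s − z_p) + 2·Σ_{i=1}^m z_s/(t⁰_i − z_s)]. (This is the identity E_2 = −(ln w)″ − ((ln w)′)² of Theorem 6.1, with ′ = ∂_u = −2πi·x·∂_x and w(x) = Π_i(x−t⁰_i)·x^{(ν/2−μ)/2}·Π_s(x−z_s)^{−m_s/2}, for which (ln w)′ = −2πi·g(x).) -/
open Complex Finset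

namespace Paper

noncomputable section

variable {n : ℕ}

variable (m : Fin n → ℕ)

/-! `g` is a constant `c` plus simple fractions with pairwise distinct poles: residue `t_i` at
`t_i` and `-m_s z_s / 2` at `z_s`. For any such function `-x g' - g²` has an explicit
partial-fraction expansion: the pole `p_k` with residue `a_k` contributes `a_k (p_k - a_k)` at
order two and `a_k (1 - 2c - 2 Σ_{l ≠ k} a_l / (p_k - p_l))` at order one. At `t_i` the double
pole cancels since `a = p`, and the simple pole cancels by the `i`-th Bethe equation. At `z_s`
these are the two coefficients of the left-hand side, since `k_s` is built from the same sum
`Σ_{l ≠ k} a_l / (p_k - p_l)`. -/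

-- Sums `∑ l, a l / (p k - p l)` run over all `l`: the diagonal term is `a k / 0 = 0`.

section PartialFractions

variable {K ι : Type*} [Field K] [Fintype ι] {p : ι → K} {x : K}

lemma sq_sum_div_sub (hp : Function.Injective p) (hx : ∀ k, x ≠ p k) (a : ι → K) :
    (∑ k, a k / (x - p k)) ^ 2
      = ∑ k, (a k ^ 2 / (x - p k) ^ 2 + 2 * a k * (∑ l, a l / (p k - p l)) / (x - p k)) := by
  classical
  have hxp : ∀ k, x - p k ≠ 0 := fun k => sub_ne_zero.mpr (hx k)
  have pair : ∀ k l, a k / (x - p k) * (a l / (x - p l))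
      = (if k = l then a k ^ 2 / (x - p k) ^ 2 else 0)
        + a k * (a l / (p k - p l)) / (x - p k) + a l * (a k / (p l - p k)) / (x - p l) := by
    intro k l
    by_cases hkl : k = l
    · subst hkl; simp [sq, div_mul_div_comm]
    · have hpkl : p k - p l ≠ 0 := sub_ne_zero.mpr (hp.ne hkl)
      have hplk : p l - p k ≠ 0 := sub_ne_zero.mpr (hp.ne (Ne.symm hkl))
      rw [if_neg hkl]
      field_simp [hxp k, hxp l]
      ring
  rw [sq, Finset.sum_mul_sum]
  simp only [pair, Finset.sum_add_distrib, Finset.sum_ite_eq, Finset.mem_univ, if_true]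
  rw [Finset.sum_comm (f := fun k l => a l * (a k / (p l - p k)) / (x - p l))]
  rw [add_assoc, ← two_mul, Finset.mul_sum]
  congr 1
  refine Finset.sum_congr rfl fun k _ => ?_
  rw [Finset.mul_sum, Finset.mul_sum, Finset.sum_div]
  exact Finset.sum_congr rfl fun l _ => by ring

lemma neg_mul_neg_sum_div_sq_sub_sq (hp : Function.Injective p) (hx : ∀ k, x ≠ p k)
    (a : ι → K) (c : K) :
    -x * -(∑ k, a k / (x - p k) ^ 2) - (c + ∑ k, a k / (x - p k)) ^ 2
      = -c ^ 2 + ∑ k, (a k * (p k - a k) / (x - p k) ^ 2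
          + a k * (1 - 2 * c - 2 * ∑ l, a l / (p k - p l)) / (x - p k)) := by
  rw [add_sq, sq_sum_div_sub hp hx, neg_mul_neg, Finset.mul_sum, Finset.mul_sum]
  have termwise : ∀ k, x * (a k / (x - p k) ^ 2)
      = 2 * c * (a k / (x - p k))
        + (a k ^ 2 / (x - p k) ^ 2 + 2 * a k * (∑ l, a l / (p k - p l)) / (x - p k))
        + (a k * (p k - a k) / (x - p k) ^ 2
          + a k * (1 - 2 * c - 2 * ∑ l, a l / (p k - p l)) / (x - p k)) := by
    intro k
    have hxp : x - p k ≠ 0 := sub_ne_zero.mpr (hx k)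
    field_simp
    ring
  rw [Finset.sum_congr rfl fun k _ => termwise k, Finset.sum_add_distrib, Finset.sum_add_distrib]
  ring

lemma inv_one_sub_div {a b : K} (ha : a ≠ 0) (hba : b ≠ a) :
    (1 - b / a)⁻¹ = -(a / (b - a)) := by
  have hba' : b - a ≠ 0 := sub_ne_zero.mpr hba
  field_simp
  ring

end PartialFractions

variable {m : Fin n → ℕ} {m' : ℕ} {z : Fin n → ℂ} {μ : ℂ} {t : Fin m' → ℂ}

variable (z t) in
def bethePole : Fin m' ⊕ Fin n → ℂ := Sum.elim t z

variable (m z t) in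
def betheResidue : Fin m' ⊕ Fin n → ℂ := Sum.elim t fun s => -(m s * z s / 2)

lemma sum_betheResidue_div (f : ℂ → ℂ) :
    ∑ k, betheResidue m z t k / f (bethePole z t k)
      = ∑ i, t i / f (t i) - 1 / 2 * ∑ s, (m s : ℂ) * z s / f (z s) := by
  rw [Fintype.sum_sum_type, sub_eq_add_neg, Finset.mul_sum, ← Finset.sum_neg_distrib]
  congr 1
  exact Finset.sum_congr rfl fun s _ => by simp only [betheResidue, bethePole, Sum.elim_inr]; ring

lemma BAE.sum_betheResidue_div_sub_eq (ht : BAE m z μ t) (i : Fin m') :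
    ∑ k, betheResidue m z t k / (t i - bethePole z t k)
      = (1 + μ + ((∑ s, (m s : ℂ)) - 2 * m') / 2) / 2 := by
  obtain ⟨hinj, ht0, htz, hbae⟩ := ht
  have hcard : ((Finset.univ.erase i).card : ℂ) = m' - 1 := by
    rw [Finset.card_erase_of_mem (Finset.mem_univ i), Finset.card_univ, Fintype.card_fin,
      Nat.cast_pred (Fin.pos i)]
  have h_tt : ∑ j, t j / (t i - t j)
      = (∑ j ∈ Finset.univ.erase i, 2 / (t i - t j)) * (t i / 2) - (m' - 1) := by
    rw [← Finset.sum_erase (a := i) _ (by simp), Finset.sum_mul, ← hcard, ← nsmul_one,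
      ← Finset.sum_const, ← Finset.sum_sub_distrib]
    refine Finset.sum_congr rfl fun j hj => ?_
    have hij : t i - t j ≠ 0 := sub_ne_zero.mpr (hinj.ne (Finset.ne_of_mem_erase hj).symm)
    field_simp
    ring
  have h_tz : ∑ s, (m s : ℂ) * z s / (t i - z s)
      = (∑ s, (m s : ℂ) / (t i - z s)) * t i - ∑ s, (m s : ℂ) := by
    rw [Finset.sum_mul, ← Finset.sum_sub_distrib]
    refine Finset.sum_congr rfl fun s _ => ?_
    have hts : t i - z s ≠ 0 := sub_ne_zero.mpr (htz i s)
    field_simp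
    ring
  have h_cancel := div_mul_cancel₀ (1 - μ + ((∑ s, (m s : ℂ)) - 2 * m') / 2) (ht0 i)
  rw [sum_betheResidue_div (t i - ·), h_tt, h_tz]
  linear_combination (t i / 2) * hbae i - h_cancel / 2

lemma kEig_eq (hz : Function.Injective z) (htz : ∀ i s, t i ≠ z s) (s : Fin n) :
    kEig m z μ t s = (m s / 2) * (1 + μ + ((∑ u, (m u : ℂ)) - 2 * m') / 2
        - 2 * ∑ k, betheResidue m z t k / (z s - bethePole z t k))
      - (m s : ℂ) * (m s + 2) / 4 := by
  have h_zz : ∑ p ∈ Finset.univ.erase s, (m p : ℂ) * z s / (z s - z p)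
      = ∑ p, (m p : ℂ) * z p / (z s - z p) + (∑ u, (m u : ℂ) - m s) := by
    rw [← Finset.sum_erase (f := fun p => (m p : ℂ) * z p / (z s - z p)) (a := s) _ (by simp),
      ← Finset.sum_erase_eq_sub (Finset.mem_univ s), ← Finset.sum_add_distrib]
    refine Finset.sum_congr rfl fun p hp => ?_
    have hsp : z s - z p ≠ 0 := sub_ne_zero.mpr (hz.ne (Finset.ne_of_mem_erase hp).symm)
    field_simp
    ring
  have h_tz : ∑ i, z s / (t i - z s) = -∑ i, t i / (z s - t i) - m' := by
    have h_shift : ∀ i, -(t i / (z s - t i)) = z s / (t i - z s) + 1 := fun i => by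
      have hts : t i - z s ≠ 0 := sub_ne_zero.mpr (htz i s)
      have hst : z s - t i ≠ 0 := sub_ne_zero.mpr (htz i s).symm
      field_simp
      ring
    simp only [← Finset.sum_neg_distrib, h_shift, Finset.sum_add_distrib, Finset.sum_const,
      Finset.card_univ, Fintype.card_fin, nsmul_eq_mul, mul_one]
    ring
  rw [kEig, sum_betheResidue_div (z s - ·), h_zz, h_tz]
  ring

theorem statement7_general
    (n : ℕ) (m : Fin n → ℕ)
    (M : ℕ) (hM : M = ∑ s, m s)
    (z : Fin n → ℂ) (hz0 : ∀ s, z s ≠ 0) (hz : Function.Injective z)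
    (μ : ℂ) (m' : ℕ) (ν : ℂ) (hν : ν = (M : ℂ) - 2 * (m' : ℂ))
    (t : Fin m' → ℂ) (ht : BAE m z μ t)
    (g g' : ℂ → ℂ)
    (hg : ∀ x, g x = -(μ + ν / 2) / 2 + (∑ i, t i / (x - t i))
        - (1 / 2) * ∑ s, (m s : ℂ) * z s / (x - z s))
    (hg' : ∀ x, g' x = -(∑ i, t i / (x - t i) ^ 2)
        + (1 / 2) * ∑ s, (m s : ℂ) * z s / (x - z s) ^ 2) :
    ∀ x : ℂ, (∀ i, x ≠ t i) → (∀ s, x ≠ z s) →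
      -(μ + ν / 2) ^ 2 / 4
        + ∑ s, (((m s : ℂ) * ((m s : ℂ) + 2) / 4 + kEig m z μ t s) / (1 - x / z s)
            - ((m s : ℂ) * ((m s : ℂ) + 2) / 4) / (1 - x / z s) ^ 2)
      = -x * g' x - (g x) ^ 2 := by
  intro x hxt hxz
  have hν' : ν = ∑ s, (m s : ℂ) - 2 * m' := by rw [hν, hM, Nat.cast_sum]
  have hp : Function.Injective (bethePole z t) := ht.1.sumElim hz ht.2.2.1
  have hx : ∀ k, x ≠ bethePole z t k := by rintro (i | s) <;> simp [bethePole, hxt, hxz]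
  have hgx : g x = -(μ + ν / 2) / 2 + ∑ k, betheResidue m z t k / (x - bethePole z t k) := by
    rw [hg, sum_betheResidue_div (x - ·)]
    ring
  have hg'x : g' x = -∑ k, betheResidue m z t k / (x - bethePole z t k) ^ 2 := by
    rw [hg', sum_betheResidue_div fun q => (x - q) ^ 2]
    ring
  rw [hgx, hg'x, neg_mul_neg_sum_div_sq_sub_sq hp hx, Fintype.sum_sum_type,
    Finset.sum_eq_zero (s := Finset.univ (α := Fin m')), zero_add]
  · congr 1
    · ring
    refine Finset.sum_congr rfl fun s _ => ?_
    rw [kEig_eq hz ht.2.2.1 s, div_eq_mul_inv, div_eq_mul_inv _ ((1 - x / z s) ^ 2), ← inv_pow,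
      inv_one_sub_div (hz0 s) (hxz s), ← hν']
    have hxz' : x - z s ≠ 0 := sub_ne_zero.mpr (hxz s)
    simp only [betheResidue, bethePole, Sum.elim_inr]
    field_simp
    ring
  · intro i _
    rw [show bethePole z t (.inl i) = t i from rfl, ht.sum_betheResidue_div_sub_eq i, ← hν']
    simp only [betheResidue, Sum.elim_inl]
    ring

/-- the computational core of Theorem 6.1 of the paper: the identity
`E₂ = -(ln w)'' - ((ln w)')²` with `' = ∂_u = -2πi x ∂_x` and
`w(x) = Π_i (x-t⁰_i) x^{(ν/2-μ)/2} Π_s (x-z_s)^{-m_s/2}`, for which `(ln w)' = -2πi g(x)`,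
written out for the function `g(x) = -(μ+ν/2)/2 + Σ_i t⁰_i/(x-t⁰_i) - ½Σ_s m_s z_s/(x-z_s)`. -/
theorem statement7
    (n : ℕ) (hn : 1 < n) (m : Fin n → ℕ) (hm : ∀ s, 0 < m s)
    (M : ℕ) (hM : M = ∑ s, m s)
    (z : Fin n → ℂ) (hz0 : ∀ s, z s ≠ 0) (hz : Function.Injective z)
    (μ : ℂ) (m' : ℕ) (ν : ℂ) (hν : ν = (M : ℂ) - 2 * (m' : ℂ))
    (t : Fin m' → ℂ) (ht : BAE m z μ t)
    (g g' : ℂ → ℂ)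
    (hg : ∀ x, g x = -(μ + ν / 2) / 2 + (∑ i, t i / (x - t i))
        - (1 / 2) * ∑ s, (m s : ℂ) * z s / (x - z s))
    (hg' : ∀ x, g' x = -(∑ i, t i / (x - t i) ^ 2)
        + (1 / 2) * ∑ s, (m s : ℂ) * z s / (x - z s) ^ 2) :
    ∀ x : ℂ, (∀ i, x ≠ t i) → (∀ s, x ≠ z s) →
      -(μ + ν / 2) ^ 2 / 4
        + ∑ s, (((m s : ℂ) * ((m s : ℂ) + 2) / 4 + kEig m z μ t s) / (1 - x / z s)
            - ((m s : ℂ) * ((m s : ℂ) + 2) / 4) / (1 - x / z s) ^ 2)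
      = -x * g' x - (g x) ^ 2 :=
  statement7_general n m M hM z hz0 hz μ m' ν hν t ht g g' hg hg'

end
end Paper
end

section
/- Let t⁰ = (t⁰_1,…,t⁰_m) be a solution of the Bethe ansatz equations for the triple (z; μ; V[ν]), ν = M − 2m, and let E_2(x) = (2πi)²·[ −(μ+ν/2)²/4 + Σ_{s=1}^n ( (m_s(m_s+2)/4 + k_s(t⁰,z,μ))/(1 − x/z_s) − (m_s(m_s+2)/4)/(1 − x/z_s)² ) ]. Let U ⊆ ℂ∖({0} ∪ {t⁰_1,…,t⁰_m} ∪ {z_1,…,z_n}) be open and let w : U → ℂ be a holomorphic nowhere-vanishing function whose logarithmic derivative is w′(x)/w(x) = (ν/2 − μ)/(2x) + Σ_{i=1}^m 1/(x − t⁰_i) − Σ_{s=1}^n (m_s/2)/(x − z_s) (i.e. w is a branch of Π_i(x−t⁰_i)·x^{(ν/2−μ)/2}·Π_s(x−z_s)^{−m_s/2}). Then w lies in the kernel of the fundamental differential operator ∂_u² + E_2: for all x ∈ U, (2πi)²·(x²·w″(x) + x·w′(x)) + E_2(x)·w(x) = 0, where ∂_u = −2πi·x·∂_x. -/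
open Complex Finset

namespace Paper

noncomputable section

variable {n : ℕ}

variable (m : Fin n → ℕ)

/-!
`w` is a branch of the master function `∏ₚ (x - aₚ) ^ rₚ`, whose poles are `0`, the `tᵢ` (with
exponent `1`) and the `zₛ` (with exponent `-mₛ/2`). Since `∂ᵤ = -2πi·x ∂ₓ`, it suffices to compute
`(x ∂ₓ)² w / w = x² (L' + L²) + x L` for `L = ∑ₚ rₚ / (x - aₚ)`. Partial fractions in the variables
`fₚ = aₚ / (x - aₚ)` give `(∑ₚ rₚ)² + ∑ₚ (rₚ (rₚ - 1) fₚ² + βₚ fₚ)`. At `tᵢ` the double pole drops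
out because `rₚ = 1`, and `βₚ` is `tᵢ` times the `i`-th Bethe ansatz equation, so it vanishes too;
at `zₛ` the coefficients are those of `E₂`, and `(∑ₚ rₚ)² = (μ + ν/2)² / 4`.
-/

section PartialFractions

variable {ι K : Type*} [Fintype ι] [DecidableEq ι] [Field K]

theorem sum_sum_erase_swap {β : Type*} [AddCommMonoid β] (f : ι → ι → β) :
    ∑ p, ∑ q ∈ univ.erase p, f p q = ∑ p, ∑ q ∈ univ.erase p, f q p :=
  Finset.sum_comm' fun p q => by simp [eq_comm, and_comm]

theorem sq_sum_eq_sum_sq_add_sum_erase {R : Type*} [CommSemiring R] (g : ι → R) :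
    (∑ p, g p) ^ 2 = ∑ p, g p ^ 2 + ∑ p, ∑ q ∈ univ.erase p, g p * g q := by
  rw [sq, Finset.sum_mul_sum, ← Finset.sum_add_distrib]
  refine Finset.sum_congr rfl fun p _ => ?_
  rw [← Finset.add_sum_erase _ _ (mem_univ p), sq]

theorem div_sub_mul_div_sub {x a b : K} (hxa : x ≠ a) (hxb : x ≠ b) (hab : a ≠ b) :
    a / (x - a) * (b / (x - b)) = b / (a - b) * (a / (x - a)) + a / (b - a) * (b / (x - b)) := by
  have := sub_ne_zero.mpr hxa
  have := sub_ne_zero.mpr hxb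
  have := sub_ne_zero.mpr hab
  have := sub_ne_zero.mpr hab.symm
  field_simp
  ring

theorem div_sub_eq_one_add {x a : K} (hxa : x ≠ a) : x / (x - a) = 1 + a / (x - a) := by
  have := sub_ne_zero.mpr hxa
  field_simp
  ring

/-- The `p`-th term on the right is `g p / 0 = 0`. -/
theorem sum_erase_div_sub_self (g a : ι → K) (p : ι) :
    ∑ q ∈ univ.erase p, g q / (a p - a q) = ∑ q, g q / (a p - a q) :=
  Finset.sum_erase _ (by simp)

def eulerPoleCoeff (a r : ι → K) (p : ι) : K :=
  r p * (2 * r p - 1) + 2 * r p * a p * ∑ q ∈ univ.erase p, r q / (a p - a q)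

/-- `(x d/dx)² ∏ₚ (x - aₚ) ^ rₚ = eulerRatio a r x * ∏ₚ (x - aₚ) ^ rₚ`. -/
def eulerRatio (a r : ι → K) (x : K) : K :=
  (∑ p, r p) ^ 2 + ∑ p, (r p * (r p - 1) * (a p / (x - a p)) ^ 2
    + eulerPoleCoeff a r p * (a p / (x - a p)))

variable {a : ι → K} {x : K}

theorem sq_sum_mul_div_sub (ha : Function.Injective a) (hx : ∀ p, x ≠ a p) (r : ι → K) :
    (∑ p, r p * (a p / (x - a p))) ^ 2 = ∑ p, r p ^ 2 * (a p / (x - a p)) ^ 2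
      + 2 * ∑ p, r p * (a p / (x - a p)) * ∑ q ∈ univ.erase p, r q * a q / (a p - a q) := by
  have hcross : ∀ p, ∀ q ∈ univ.erase p,
      r p * (a p / (x - a p)) * (r q * (a q / (x - a q)))
        = r p * (a p / (x - a p)) * (r q * a q / (a p - a q))
          + r q * (a q / (x - a q)) * (r p * a p / (a q - a p)) := fun p q hq => by
    have hpq := ha.ne (Finset.ne_of_mem_erase hq).symm
    linear_combination r p * r q * div_sub_mul_div_sub (hx p) (hx q) hpq
  rw [sq_sum_eq_sum_sq_add_sum_erase,
    Finset.sum_congr rfl fun p _ => Finset.sum_congr rfl (hcross p)]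
  simp only [Finset.sum_add_distrib, mul_pow, two_mul, Finset.mul_sum]
  rw [sum_sum_erase_swap fun p q => r q * (a q / (x - a q)) * (r p * a p / (a q - a p))]

theorem sum_erase_mul_div_sub (ha : Function.Injective a) (r : ι → K) (p : ι) :
    ∑ q ∈ univ.erase p, r q * a q / (a p - a q)
      = a p * ∑ q ∈ univ.erase p, r q / (a p - a q) - (∑ q, r q - r p) := by
  rw [← Finset.sum_erase_eq_sub (mem_univ p), Finset.mul_sum, ← Finset.sum_sub_distrib]
  refine Finset.sum_congr rfl fun q hq => ?_
  have := sub_ne_zero.mpr (ha.ne (Finset.ne_of_mem_erase hq).symm)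
  field_simp
  ring

/-- With `L = ∑ₚ rₚ / (x - aₚ)` this is `x² (L' + L²) + x L`. -/
theorem eulerRatio_eq (ha : Function.Injective a) (hx : ∀ p, x ≠ a p) (r : ι → K) :
    eulerRatio a r x = x ^ 2 * (-(∑ p, r p / (x - a p) ^ 2) + (∑ p, r p / (x - a p)) ^ 2)
      + x * ∑ p, r p / (x - a p) := by
  have hL : x * ∑ p, r p / (x - a p) = ∑ p, r p + ∑ p, r p * (a p / (x - a p)) := by
    rw [Finset.mul_sum, ← Finset.sum_add_distrib]
    refine Finset.sum_congr rfl fun p _ => ?_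
    rw [mul_div_left_comm, div_sub_eq_one_add (hx p)]
    ring
  have hL' : x ^ 2 * ∑ p, r p / (x - a p) ^ 2 = ∑ p, r p * (1 + a p / (x - a p)) ^ 2 := by
    rw [Finset.mul_sum]
    refine Finset.sum_congr rfl fun p _ => ?_
    rw [mul_div_left_comm, ← div_pow, div_sub_eq_one_add (hx p)]
  have hF := sq_sum_mul_div_sub ha hx r
  simp only [sum_erase_mul_div_sub ha] at hF
  have hpt : ∀ p, r p * (r p - 1) * (a p / (x - a p)) ^ 2 + eulerPoleCoeff a r p * (a p / (x - a p))
      = r p ^ 2 * (a p / (x - a p)) ^ 2 + 2 * (r p * (a p / (x - a p))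
          * (a p * ∑ q ∈ univ.erase p, r q / (a p - a q) - (∑ q, r q - r p)))
        - r p * (1 + a p / (x - a p)) ^ 2 + (r p + r p * (a p / (x - a p)))
        + 2 * (∑ q, r q) * (r p * (a p / (x - a p))) := fun p => by
    rw [eulerPoleCoeff]
    ring
  rw [mul_add, mul_neg, hL', ← mul_pow, hL, add_sq, hF, eulerRatio,
    Finset.sum_congr rfl fun p _ => hpt p]
  simp only [Finset.sum_add_distrib, Finset.sum_sub_distrib, ← Finset.mul_sum]
  ring

end PartialFractions

section Riccati

variable {𝕜 : Type*} [NontriviallyNormedField 𝕜] {x : 𝕜}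

theorem hasDerivAt_sum_div_sub {ι : Type*} [Fintype ι] {a : ι → 𝕜} (hx : ∀ p, x ≠ a p)
    (r : ι → 𝕜) :
    HasDerivAt (fun y => ∑ p, r p / (y - a p)) (-(∑ p, r p / (x - a p) ^ 2)) x := by
  rw [← Finset.sum_neg_distrib]
  refine HasDerivAt.fun_sum fun p _ => ?_
  simpa [div_eq_mul_inv, neg_div] using
    (((hasDerivAt_id x).sub_const (a p)).fun_inv (sub_ne_zero.mpr (hx p))).const_mul (r p)

theorem second_deriv_eq_of_logDeriv_eq {U : Set 𝕜} (hU : IsOpen U) (hx : x ∈ U)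
    {L : 𝕜 → 𝕜} {L' : 𝕜} {w w' : 𝕜 → 𝕜} {w'' : 𝕜} (hL : HasDerivAt L L' x)
    (hw : HasDerivAt w (w' x) x) (hw' : HasDerivAt w' w'' x) (hlog : ∀ y ∈ U, w' y = L y * w y) :
    w'' = (L' + L x ^ 2) * w x := by
  have hlog_near : w' =ᶠ[nhds x] fun y => L y * w y :=
    Filter.eventually_of_mem (hU.mem_nhds hx) hlog
  rw [hw'.unique ((hL.mul hw).congr_of_eventuallyEq hlog_near), hlog x hx]
  ring

theorem euler_sq_eq_eulerRatio_mul {ι : Type*} [Fintype ι] [DecidableEq ι] {a r : ι → 𝕜}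
    {U : Set 𝕜} (hU : IsOpen U) (ha : Function.Injective a) (hUa : ∀ x ∈ U, ∀ p, x ≠ a p)
    {w w' w'' : 𝕜 → 𝕜} (hw : ∀ x ∈ U, HasDerivAt w (w' x) x)
    (hw' : ∀ x ∈ U, HasDerivAt w' (w'' x) x)
    (hlog : ∀ x ∈ U, w' x = (∑ p, r p / (x - a p)) * w x) :
    ∀ x ∈ U, x ^ 2 * w'' x + x * w' x = eulerRatio a r x * w x := by
  intro x hx
  rw [second_deriv_eq_of_logDeriv_eq hU hx (hasDerivAt_sum_div_sub (hUa x hx) r) (hw x hx)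
    (hw' x hx) hlog, hlog x hx, eulerRatio_eq ha (hUa x hx)]
  ring

end Riccati

section MasterFunction

variable {m' : ℕ}

/-- The master function `∏ᵢ (x - tᵢ) · x ^ ((ν/2 - μ)/2) · ∏ₛ (x - zₛ) ^ (-mₛ/2)`,
`ν = M - 2m'`, is `∏ₚ (x - masterPole t z p) ^ masterExponent m μ m' p`. -/
def masterPole (t : Fin m' → ℂ) (z : Fin n → ℂ) : Option (Fin m' ⊕ Fin n) → ℂ
  | none => 0
  | some (.inl i) => t i
  | some (.inr s) => z s

def masterExponent (μ : ℂ) (m' : ℕ) : Option (Fin m' ⊕ Fin n) → ℂ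
  | none => (((∑ u, (m u : ℂ)) - 2 * m') / 2 - μ) / 2
  | some (.inl _) => 1
  | some (.inr s) => -((m s : ℂ) / 2)

variable {z : Fin n → ℂ} {t : Fin m' → ℂ}

theorem masterPole_injective (hz0 : ∀ s, z s ≠ 0) (hz : Function.Injective z)
    (ht : Function.Injective t) (ht0 : ∀ i, t i ≠ 0) (htz : ∀ i s, t i ≠ z s) :
    Function.Injective (masterPole t z) := by
  rintro (_ | i | s) (_ | j | u) h <;>
    simp_all [masterPole, ht.eq_iff, hz.eq_iff, eq_comm]

theorem sum_masterExponent_div (μ x : ℂ) :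
    ∑ p, masterExponent m μ m' p / (x - masterPole t z p)
      = (((∑ u, (m u : ℂ)) - 2 * m') / 2 - μ) / (2 * x) + ∑ i, 1 / (x - t i)
        - ∑ s, ((m s : ℂ) / 2) / (x - z s) := by
  simp only [Fintype.sum_option, Fintype.sum_sum_type, masterExponent, masterPole, sub_zero,
    div_div, one_div, neg_div, sum_neg_distrib]
  ring

theorem eulerPoleCoeff_masterPole_inl {μ : ℂ} (ht : BAE m z μ t) (i : Fin m') :
    eulerPoleCoeff (masterPole t z) (masterExponent m μ m') (some (.inl i)) = 0 := by
  obtain ⟨-, ht0, -, hbae⟩ := ht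
  have hbae := hbae i
  have h2 : ∑ j, 2 / (t i - t j) = 2 * ∑ j, 1 / (t i - t j) := by
    rw [Finset.mul_sum]
    simp_rw [mul_one_div]
  have hm : ∑ s, (m s : ℂ) / (t i - z s) = -2 * ∑ s, -((m s : ℂ) / 2) / (t i - z s) := by
    rw [Finset.mul_sum]
    exact Finset.sum_congr rfl fun s _ => by ring
  rw [sum_erase_div_sub_self (fun _ => 2) t, h2, hm] at hbae
  rw [eulerPoleCoeff, sum_erase_div_sub_self]
  simp only [Fintype.sum_option, Fintype.sum_sum_type, masterPole, masterExponent, sub_zero]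
  linear_combination t i * hbae - mul_inv_cancel₀ (ht0 i)

theorem eulerPoleCoeff_masterPole_inr (μ : ℂ) {s : Fin n} (hz0 : z s ≠ 0) :
    eulerPoleCoeff (masterPole t z) (masterExponent m μ m') (some (.inr s))
      = (m s : ℂ) / 2 * ((m s : ℂ) / 2 + 1) + kEig m z μ t s := by
  have hzz : ∑ p, (m p : ℂ) * z s / (z s - z p)
      = -2 * z s * ∑ p, -((m p : ℂ) / 2) / (z s - z p) := by
    rw [Finset.mul_sum]
    exact Finset.sum_congr rfl fun p _ => by ring
  have htz : ∑ i, z s / (t i - z s) = -z s * ∑ i, 1 / (z s - t i) := by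
    rw [Finset.mul_sum]
    exact Finset.sum_congr rfl fun i _ => by rw [← neg_sub, div_neg]; ring
  rw [eulerPoleCoeff, sum_erase_div_sub_self, kEig,
    sum_erase_div_sub_self (fun p => (m p : ℂ) * z s) z, hzz, htz]
  simp only [Fintype.sum_option, Fintype.sum_sum_type, masterPole, masterExponent, sub_zero]
  linear_combination (-((m s : ℂ) / 2) * (((∑ u, (m u : ℂ)) - 2 * m') / 2 - μ))
    * mul_inv_cancel₀ hz0

theorem E2fun_eq_neg_eulerRatio {μ x : ℂ} (hz0 : ∀ s, z s ≠ 0) (ht : BAE m z μ t)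
    (hxz : ∀ s, x ≠ z s) :
    E2fun m z μ t x
      = -(2 * (Real.pi : ℂ) * I) ^ 2 * eulerRatio (masterPole t z) (masterExponent m μ m') x := by
  have hterm : ∀ s, ((m s : ℂ) * ((m s : ℂ) + 2) / 4 + kEig m z μ t s) / (1 - x / z s)
        - ((m s : ℂ) * ((m s : ℂ) + 2) / 4) / (1 - x / z s) ^ 2
      = -(-((m s : ℂ) / 2) * (-((m s : ℂ) / 2) - 1) * (z s / (x - z s)) ^ 2
        + ((m s : ℂ) / 2 * ((m s : ℂ) / 2 + 1) + kEig m z μ t s) * (z s / (x - z s))) := by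
    intro s
    have := hz0 s
    have := sub_ne_zero.mpr (hxz s)
    have : z s - x ≠ 0 := sub_ne_zero.mpr (hxz s).symm
    field_simp
    ring
  simp only [eulerRatio, Fintype.sum_option, Fintype.sum_sum_type, masterPole, masterExponent,
    eulerPoleCoeff_masterPole_inl m ht, eulerPoleCoeff_masterPole_inr m μ (hz0 _), sub_zero,
    zero_div, sub_self, zero_mul, mul_zero, add_zero, zero_add, Finset.sum_const_zero,
    Finset.sum_neg_distrib, ← Finset.sum_div, Finset.sum_const, Finset.card_univ,
    Fintype.card_fin, nsmul_eq_mul, mul_one]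
  simp only [E2fun, hterm, Finset.sum_neg_distrib]
  ring

end MasterFunction

theorem statement8_general
    (n : ℕ) (m : Fin n → ℕ)
    (M : ℕ) (hM : M = ∑ s, m s)
    (z : Fin n → ℂ) (hz0 : ∀ s, z s ≠ 0) (hz : Function.Injective z)
    (μ : ℂ) (m' : ℕ) (ν : ℂ) (hν : ν = (M : ℂ) - 2 * (m' : ℂ))
    (t : Fin m' → ℂ) (ht : BAE m z μ t)
    (U : Set ℂ) (hU : IsOpen U)
    (hUavoid : ∀ x ∈ U, x ≠ 0 ∧ (∀ i, x ≠ t i) ∧ (∀ s, x ≠ z s))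
    (w w' w'' : ℂ → ℂ)
    (hw : ∀ x ∈ U, HasDerivAt w (w' x) x)
    (hw' : ∀ x ∈ U, HasDerivAt w' (w'' x) x)
    (hw0 : ∀ x ∈ U, w x ≠ 0)
    (hwlog : ∀ x ∈ U, w' x / w x
        = (ν / 2 - μ) / (2 * x) + (∑ i, 1 / (x - t i)) - ∑ s, ((m s : ℂ) / 2) / (x - z s)) :
    ∀ x ∈ U,
      (2 * (Real.pi : ℂ) * Complex.I) ^ 2 * (x ^ 2 * w'' x + x * w' x)
        + E2fun m z μ t x * w x = 0 := by
  subst hν hM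
  have hpoles : ∀ x ∈ U, ∀ p, x ≠ masterPole t z p := by
    rintro x hx (_ | i | s)
    exacts [(hUavoid x hx).1, (hUavoid x hx).2.1 i, (hUavoid x hx).2.2 s]
  have hlog : ∀ x ∈ U, w' x = (∑ p, masterExponent m μ m' p / (x - masterPole t z p)) * w x := by
    intro x hx
    rw [sum_masterExponent_div, ← div_eq_iff (hw0 x hx), hwlog x hx]
    push_cast
    ring
  intro x hx
  rw [E2fun_eq_neg_eulerRatio m hz0 ht (hUavoid x hx).2.2,
    euler_sq_eq_eulerRatio_mul hU (masterPole_injective hz0 hz ht.1 ht.2.1 ht.2.2.1) hpoles hw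
      hw' hlog x hx]
  ring

/-- Corollary 6.2 of the paper.  If `t⁰` solves the Bethe ansatz equations for
`(z; μ; V[ν])`, `ν = M - 2m'`, and `w` is a holomorphic nowhere-vanishing branch of
`Π_i (x-t⁰_i) x^{(ν/2-μ)/2} Π_s (x-z_s)^{-m_s/2}` on an open set `U` avoiding
`0, t⁰_1,…,t⁰_{m'}, z_1,…,z_n`, then `w` lies in the kernel of the fundamental differential
operator `∂_u² + E₂`, i.e. `(2πi)²(x²w'' + xw') + E₂(x) w = 0` on `U`. -/
theorem statement8
    (n : ℕ) (hn : 1 < n) (m : Fin n → ℕ) (hm : ∀ s, 0 < m s)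
    (M : ℕ) (hM : M = ∑ s, m s)
    (z : Fin n → ℂ) (hz0 : ∀ s, z s ≠ 0) (hz : Function.Injective z)
    (μ : ℂ) (m' : ℕ) (ν : ℂ) (hν : ν = (M : ℂ) - 2 * (m' : ℂ))
    (t : Fin m' → ℂ) (ht : BAE m z μ t)
    (U : Set ℂ) (hU : IsOpen U)
    (hUavoid : ∀ x ∈ U, x ≠ 0 ∧ (∀ i, x ≠ t i) ∧ (∀ s, x ≠ z s))
    (w w' w'' : ℂ → ℂ)
    (hw : ∀ x ∈ U, HasDerivAt w (w' x) x)
    (hw' : ∀ x ∈ U, HasDerivAt w' (w'' x) x)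
    (hw0 : ∀ x ∈ U, w x ≠ 0)
    (hwlog : ∀ x ∈ U, w' x / w x
        = (ν / 2 - μ) / (2 * x) + (∑ i, 1 / (x - t i)) - ∑ s, ((m s : ℂ) / 2) / (x - z s)) :
    ∀ x ∈ U,
      (2 * (Real.pi : ℂ) * Complex.I) ^ 2 * (x ^ 2 * w'' x + x * w' x)
        + E2fun m z μ t x * w x = 0 :=
  statement8_general n m M hM z hz0 hz μ m' ν hν t ht U hU hUavoid w w' w'' hw hw' hw0 hwlog

end
end Paper
end

section
/- Assume μ ≠ ν/2, where ν = M − 2m. Let t_1,…,t_m be pairwise distinct complex numbers with t_i ≠ z_s for all i and s, and let y(X) = Π_{i=1}^m (X − t_i). Suppose there exist a polynomial ỹ ∈ ℂ[X] and a constant c ∈ ℂ, c ≠ 0, such that (μ − ν/2)·y·ỹ + X·(y·ỹ′ − y′·ỹ) = c·Π_{s=1}^n (X − z_s)^{m_s} in ℂ[X]. Then every t_i is nonzero and (t_1,…,t_m) is a solution of the Bethe ansatz equations for the triple (z; μ; V[ν]): (1 − μ + ν/2)/t_i + Σ_{j≠i} 2/(t_i − t_j) − Σ_{s=1}^n m_s/(t_i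 − z_s) = 0 for i = 1,…,m. -/
/-!
Write `y = (X - t_i) q`. At `X = t_i` the identity reads `-t_i q(t_i) ỹ(t_i) = P(t_i)`, where
`P = c Π_s (X - z_s)^{m_s}` does not vanish there; hence `t_i ≠ 0` and `q(t_i) ỹ(t_i) ≠ 0`.
Its derivative at `t_i`, using `y''(t_i) = 2 q'(t_i)`, reads
`(μ - ν/2 - 1) q ỹ - 2 t_i q' ỹ = P'`. Dividing by the first relation and inserting the
logarithmic derivatives `q'/q = Σ_{j≠i} 1/(t_i - t_j)` and `P'/P = Σ_s m_s/(t_i - z_s)` gives the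
Bethe ansatz equation for `t_i`.
-/

open Complex Finset

namespace Polynomial

variable {K : Type*} [Field K]

theorem eval_derivative_prod_X_sub_C_pow {ι : Type*} (s : Finset ι) (r : ι → K) (k : ι → ℕ)
    {a : K} (ha : ∀ i ∈ s, a ≠ r i) :
    (derivative (∏ i ∈ s, (X - C (r i)) ^ k i)).eval a =
      (∏ i ∈ s, (X - C (r i)) ^ k i).eval a * ∑ i ∈ s, (k i : K) / (a - r i) := by
  classical
  induction s using Finset.induction_on with
  | empty => simp
  | insert j s hj ih =>
    have hja : a - r j ≠ 0 := sub_ne_zero.mpr (ha j (Finset.mem_insert_self j s))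
    rw [Finset.prod_insert hj, Finset.sum_insert hj, derivative_mul, derivative_X_sub_C_pow]
    simp only [eval_add, eval_mul, eval_C, eval_pow, eval_sub, eval_X]
    rw [ih fun i hi => ha i (Finset.mem_insert_of_mem hi)]
    cases k j with
    | zero => simp
    | succ l =>
      rw [Nat.add_sub_cancel, pow_succ]
      field_simp

theorem eval_derivative_prod_X_sub_C {ι : Type*} (s : Finset ι) (r : ι → K)
    {a : K} (ha : ∀ i ∈ s, a ≠ r i) :
    (derivative (∏ i ∈ s, (X - C (r i)))).eval a =
      (∏ i ∈ s, (X - C (r i))).eval a * ∑ i ∈ s, 1 / (a - r i) := by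
  simpa using eval_derivative_prod_X_sub_C_pow s r (fun _ => 1) ha

theorem eval_wronskian_root {A a : K} {q Y P : K[X]}
    (h : C A * ((X - C a) * q * Y) +
        X * ((X - C a) * q * derivative Y - derivative ((X - C a) * q) * Y) = P) :
    a * (q.eval a * Y.eval a) = -P.eval a ∧
      (A - 1) * (q.eval a * Y.eval a) - 2 * a * ((derivative q).eval a * Y.eval a) =
        (derivative P).eval a := by
  subst h
  constructor
  · simp only [eval_add, eval_mul, eval_sub, eval_C, eval_X, derivative_mul, derivative_X_sub_C,
      eval_one]
    ring
  · simp only [eval_add, eval_mul, eval_sub, eval_C, eval_X, eval_one, eval_zero, derivative_mul,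
      derivative_add, derivative_sub, derivative_C, derivative_X, derivative_zero, derivative_one]
    ring

theorem bethe_eq_of_wronskian {A a : K} {q Y P : K[X]} (hq : q.eval a ≠ 0) (hP : P.eval a ≠ 0)
    (h : C A * ((X - C a) * q * Y) +
        X * ((X - C a) * q * derivative Y - derivative ((X - C a) * q) * Y) = P) :
    a ≠ 0 ∧ (1 - A) / a + 2 * ((derivative q).eval a / q.eval a)
      - (derivative P).eval a / P.eval a = 0 := by
  obtain ⟨hroot, hderiv⟩ := eval_wronskian_root h
  have ha : a ≠ 0 := by
    rintro rfl
    exact hP (neg_eq_zero.mp (by rw [← hroot, zero_mul]))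
  have hcleared : (1 - A) * q.eval a * P.eval a + 2 * a * (derivative q).eval a * P.eval a
      - a * q.eval a * (derivative P).eval a = 0 := by
    linear_combination a * q.eval a * hderiv
      + ((1 - A) * q.eval a + 2 * a * (derivative q).eval a) * hroot
  refine ⟨ha, ?_⟩
  field_simp
  linear_combination hcleared

end Polynomial

namespace Paper

noncomputable section

open Polynomial in
theorem statement10_general
    (n : ℕ) (m : Fin n → ℕ)
    (z : Fin n → ℂ)
    (μ : ℂ) (m' : ℕ) (ν : ℂ)
    (t : Fin m' → ℂ) (htinj : Function.Injective t) (htz : ∀ i s, t i ≠ z s)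
    (Y : Polynomial ℂ) (c : ℂ) (hc : c ≠ 0)
    (hid : C (μ - ν / 2) * ((∏ i, (X - C (t i))) * Y)
          + X * ((∏ i, (X - C (t i))) * derivative Y
              - derivative (∏ i, (X - C (t i))) * Y)
        = C c * ∏ s, (X - C (z s)) ^ (m s)) :
    (∀ i, t i ≠ 0) ∧
      ∀ i, (1 - μ + ν / 2) / t i + (∑ j ∈ Finset.univ.erase i, 2 / (t i - t j))
          - ∑ s, (m s : ℂ) / (t i - z s) = 0 := by
  refine forall_and.mp fun i => ?_
  have hti : ∀ j ∈ Finset.univ.erase i, t i ≠ t j := fun j hj =>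
    htinj.ne (Finset.ne_of_mem_erase hj).symm
  have hq : (∏ j ∈ Finset.univ.erase i, (X - C (t j))).eval (t i) ≠ 0 := by
    simpa [eval_prod, Finset.prod_eq_zero_iff, sub_eq_zero] using hti
  have hprod : (∏ s, (X - C (z s)) ^ m s).eval (t i) ≠ 0 := by
    simp only [eval_prod, eval_pow, eval_sub, eval_X, eval_C]
    exact Finset.prod_ne_zero_iff.mpr fun s _ => pow_ne_zero _ (sub_ne_zero.mpr (htz i s))
  have hP : (C c * ∏ s, (X - C (z s)) ^ m s).eval (t i) ≠ 0 := by
    rw [eval_mul, eval_C]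
    exact mul_ne_zero hc hprod
  rw [← Finset.mul_prod_erase _ _ (Finset.mem_univ i)] at hid
  obtain ⟨hti0, hbethe⟩ := bethe_eq_of_wronskian hq hP hid
  rw [eval_derivative_prod_X_sub_C _ _ hti, mul_div_cancel_left₀ _ hq, derivative_mul,
    derivative_C, zero_mul, zero_add, eval_mul, eval_mul, eval_C,
    eval_derivative_prod_X_sub_C_pow _ _ _ fun s _ => htz i s, mul_div_mul_left _ _ hc,
    mul_div_cancel_left₀ _ hprod] at hbethe
  refine ⟨hti0, ?_⟩
  have htwo : ∑ j ∈ Finset.univ.erase i, 2 / (t i - t j)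
      = 2 * ∑ j ∈ Finset.univ.erase i, 1 / (t i - t j) := by
    simp only [Finset.mul_sum, mul_one_div]
  rw [htwo]
  linear_combination hbethe

open Polynomial in
/-- Lemma 7.2(ii) of the paper; Corollary 3.3 of [MV2].  Assume `μ ≠ ν/2`,
`ν = M - 2m'`.  If `t_1,…,t_{m'}` are pairwise distinct, `t_i ≠ z_s`, `y = Π_i (X - t_i)`
and there exist a polynomial `ỹ` and a nonzero constant `c` with
`(μ - ν/2) y ỹ + X (y ỹ' - y' ỹ) = c Π_s (X - z_s)^{m_s}`, then every `t_i` is nonzero and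
`t` solves the Bethe ansatz equations for `(z; μ; V[ν])`. -/
theorem statement10
    (n : ℕ) (hn : 1 < n) (m : Fin n → ℕ) (hm : ∀ s, 0 < m s)
    (M : ℕ) (hM : M = ∑ s, m s)
    (z : Fin n → ℂ) (hz0 : ∀ s, z s ≠ 0) (hz : Function.Injective z)
    (μ : ℂ) (m' : ℕ) (ν : ℂ) (hν : ν = (M : ℂ) - 2 * (m' : ℂ))
    (hμ : μ ≠ ν / 2)
    (t : Fin m' → ℂ) (htinj : Function.Injective t) (htz : ∀ i s, t i ≠ z s)
    (Y : Polynomial ℂ) (c : ℂ) (hc : c ≠ 0)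
    (hid : C (μ - ν / 2) * ((∏ i, (X - C (t i))) * Y)
          + X * ((∏ i, (X - C (t i))) * derivative Y
              - derivative (∏ i, (X - C (t i))) * Y)
        = C c * ∏ s, (X - C (z s)) ^ (m s)) :
    (∀ i, t i ≠ 0) ∧
      ∀ i, (1 - μ + ν / 2) / t i + (∑ j ∈ Finset.univ.erase i, 2 / (t i - t j))
          - ∑ s, (m s : ℂ) / (t i - z s) = 0 :=
  statement10_general n m z μ m' ν t htinj htz Y c hc hid

end
end Paper
end

section
/- Assume μ ∉ ν/2 + ℤ_{≥0}, ν = M − 2m. Let t⁰ be a solution of the Bethe ansatz equations for (z; μ; V[ν]) and ỹ(X) = Π_{i=1}^{M−m}(X − t̃⁰_i) the unique monic polynomial of degree M − m with (μ − ν/2)·y·ỹ + X·(y·ỹ′ − y′·ỹ) = (μ + ν/2)·Π_{s=1}^n (X − z_s)^{m_s}, y(X) = Π_{i=1}^m(X − t⁰_i); assume t̃⁰_1,…,t̃⁰_{M−m} are pairwise distinct and ỹ(z_s) ≠ 0 for all s. Then for every s = 1,…,n the eigenvalue of K_s(z,μ) on the Bethe vector ω(t⁰,z) equals the eigenvalue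 of K_s(z,−μ) on ω(t̃⁰,z); explicitly, (m_s/2)·[(μ − ν/2 + m_s/2) + Σ_{p≠s} m_p·z_s/(z_s − z_p) + 2·Σ_{i=1}^m z_s/(t⁰_i − z_s)] = (m_s/2)·[(−μ + ν/2 + m_s/2) + Σ_{p≠s} m_p·z_s/(z_s − z_p) + 2·Σ_{i=1}^{M−m} z_s/(t̃⁰_i − z_s)]. -/
/-!
Evaluate the defining identity of `ỹ` at `X = z_s`. The right-hand side vanishes there because
`m_s > 0`, while `y(z_s) ỹ(z_s) ≠ 0`, so dividing by it gives
`(μ - ν/2) + z_s (ỹ'/ỹ - y'/y)(z_s) = 0`. The logarithmic derivatives are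
`Σ_i 1/(z_s - t_i)` and `Σ_i 1/(z_s - t̃_i)`, and this relation is exactly the difference of the
two eigenvalues divided by `m_s`.
-/

open Complex Finset

namespace Paper

noncomputable section

variable {n : ℕ}

variable (m : Fin n → ℕ)

section

open Polynomial

variable {K ι : Type*} [Field K]

theorem eval_prod_X_sub_C_ne_zero (s : Finset ι) (u : ι → K) {x : K} (hx : ∀ i ∈ s, u i ≠ x) :
    (∏ i ∈ s, (X - C (u i))).eval x ≠ 0 := by
  simp only [eval_prod, eval_sub, eval_X, eval_C]
  exact prod_ne_zero_iff.mpr fun i hi => sub_ne_zero.mpr (hx i hi).symm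

theorem eval_derivative_prod_X_sub_C_div (s : Finset ι) (u : ι → K) {x : K}
    (hx : ∀ i ∈ s, u i ≠ x) :
    (derivative (∏ i ∈ s, (X - C (u i)))).eval x / (∏ i ∈ s, (X - C (u i))).eval x
      = ∑ i ∈ s, (x - u i)⁻¹ := by
  classical
  have hne : ∀ i ∈ s, x - u i ≠ 0 := fun i hi => sub_ne_zero.mpr (hx i hi).symm
  rw [derivative_prod_finset, div_eq_iff (eval_prod_X_sub_C_ne_zero s u hx), sum_mul,
    eval_finsetSum]
  refine sum_congr rfl fun i hi => ?_
  simp only [derivative_X_sub_C, mul_one, eval_prod, eval_sub, eval_X, eval_C]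
  rw [← prod_erase_mul s _ hi]
  field_simp [hne i hi]

theorem add_mul_sub_logDeriv_eq_zero_of_isRoot {c x : K} {y w : K[X]}
    (hroot : (C c * (y * w) + X * wronskian y w).IsRoot x) (hy : y.eval x ≠ 0)
    (hw : w.eval x ≠ 0) :
    c + x * ((derivative w).eval x / w.eval x - (derivative y).eval x / y.eval x) = 0 := by
  simp only [IsRoot, wronskian, eval_add, eval_mul, eval_sub, eval_C, eval_X] at hroot
  field_simp
  linear_combination hroot

theorem sum_div_sub_eq_neg_mul_sum_inv_sub (s : Finset ι) (u : ι → K) (x : K) :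
    ∑ i ∈ s, x / (u i - x) = -(x * ∑ i ∈ s, (x - u i)⁻¹) := by
  rw [mul_sum, ← sum_neg_distrib]
  exact sum_congr rfl fun i _ => by rw [← neg_sub, div_neg, div_eq_mul_inv]

end

open Polynomial in
theorem statement14_general
    (n : ℕ) (m : Fin n → ℕ) (hm : ∀ s, 0 < m s)
    (M : ℕ)
    (z : Fin n → ℂ)
    (μ : ℂ) (m' : ℕ) (ν : ℂ)
    (t : Fin m' → ℂ) (ht : BAE m z μ t)
    (tt : Fin (M - m') → ℂ)
    (httz : ∀ i s, tt i ≠ z s)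
    (hid : C (μ - ν / 2) * ((∏ i, (X - C (t i))) * ∏ i, (X - C (tt i)))
          + X * ((∏ i, (X - C (t i))) * derivative (∏ i, (X - C (tt i)))
              - derivative (∏ i, (X - C (t i))) * ∏ i, (X - C (tt i)))
        = C (μ + ν / 2) * ∏ s, (X - C (z s)) ^ (m s)) :
    ∀ s : Fin n,
      ((m s : ℂ) / 2) * ((μ - ν / 2 + (m s : ℂ) / 2)
          + (∑ p ∈ Finset.univ.erase s, (m p : ℂ) * z s / (z s - z p))
          + 2 * ∑ i, z s / (t i - z s))
        = ((m s : ℂ) / 2) * ((-μ + ν / 2 + (m s : ℂ) / 2)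
          + (∑ p ∈ Finset.univ.erase s, (m p : ℂ) * z s / (z s - z p))
          + 2 * ∑ i, z s / (tt i - z s)) := by
  intro s
  have ht' : ∀ i ∈ univ, t i ≠ z s := fun i _ => ht.2.2.1 i s
  have htt' : ∀ i ∈ univ, tt i ≠ z s := fun i _ => httz i s
  have hroot : (C (μ - ν / 2) * ((∏ i, (X - C (t i))) * ∏ i, (X - C (tt i)))
      + X * wronskian (∏ i, (X - C (t i))) (∏ i, (X - C (tt i)))).IsRoot (z s) := by
    rw [wronskian, hid]
    simp only [IsRoot, eval_mul, eval_C, eval_prod, eval_pow, eval_sub, eval_X]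
    exact mul_eq_zero_of_right _ (prod_eq_zero (mem_univ s) (by simp [(hm s).ne']))
  have hlog := add_mul_sub_logDeriv_eq_zero_of_isRoot hroot
    (eval_prod_X_sub_C_ne_zero _ _ ht') (eval_prod_X_sub_C_ne_zero _ _ htt')
  rw [eval_derivative_prod_X_sub_C_div _ _ ht',
    eval_derivative_prod_X_sub_C_div _ _ htt'] at hlog
  rw [sum_div_sub_eq_neg_mul_sum_inv_sub, sum_div_sub_eq_neg_mul_sum_inv_sub]
  linear_combination (m s : ℂ) * hlog

open Polynomial in
/-- Corollary 7.6 of the paper.  Under the hypotheses of Lemma 7.4, for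
every `s` the eigenvalue of `K_s(z,μ)` on `ω(t⁰,z)` equals the eigenvalue of `K_s(z,-μ)`
on `ω(t̃⁰,z)`; explicitly `k_s(t⁰,z,μ) = k_s(t̃⁰,z,-μ)` (the latter computed in weight
`-ν`). -/
theorem statement14
    (n : ℕ) (hn : 1 < n) (m : Fin n → ℕ) (hm : ∀ s, 0 < m s)
    (M : ℕ) (hM : M = ∑ s, m s)
    (z : Fin n → ℂ) (hz0 : ∀ s, z s ≠ 0) (hz : Function.Injective z)
    (μ : ℂ) (m' : ℕ) (hm' : m' ≤ M) (ν : ℂ) (hν : ν = (M : ℂ) - 2 * (m' : ℂ))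
    (hμ : ∀ k : ℕ, μ ≠ ν / 2 + (k : ℂ))
    (t : Fin m' → ℂ) (ht : BAE m z μ t)
    (tt : Fin (M - m') → ℂ) (httinj : Function.Injective tt)
    (httz : ∀ i s, tt i ≠ z s)
    (hid : C (μ - ν / 2) * ((∏ i, (X - C (t i))) * ∏ i, (X - C (tt i)))
          + X * ((∏ i, (X - C (t i))) * derivative (∏ i, (X - C (tt i)))
              - derivative (∏ i, (X - C (t i))) * ∏ i, (X - C (tt i)))
        = C (μ + ν / 2) * ∏ s, (X - C (z s)) ^ (m s)) :
    ∀ s : Fin n,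
      ((m s : ℂ) / 2) * ((μ - ν / 2 + (m s : ℂ) / 2)
          + (∑ p ∈ Finset.univ.erase s, (m p : ℂ) * z s / (z s - z p))
          + 2 * ∑ i, z s / (t i - z s))
        = ((m s : ℂ) / 2) * ((-μ + ν / 2 + (m s : ℂ) / 2)
          + (∑ p ∈ Finset.univ.erase s, (m p : ℂ) * z s / (z s - z p))
          + 2 * ∑ i, z s / (tt i - z s)) :=
  statement14_general n m hm M z μ m' ν t ht tt httz hid

end
end Paper
end

section
/- Assume μ ∉ ν/2 + ℤ_{≥0}, ν = M − 2m. Let t⁰ be a solution of the Bethe ansatz equations for (z; μ; V[ν]) and ỹ(X) = Π_{i=1}^{M−m}(X − t̃⁰_i) the unique monic polynomial of degree M − m with (μ − ν/2)·y·ỹ + X·(y·ỹ′ − y′·ỹ) = (μ + ν/2)·Π_{s=1}^n (X − z_s)^{m_s}, y(X) = Π_{i=1}^m(X − t⁰_i); assume the t̃⁰_i are pairwise distinct and ỹ(z_s) ≠ 0 for all s (so that, by Lemma 7.4 of the paper, t̃⁰ solves the Bethe ansatz equations for (z; −μ; V[−ν])). Then the two eigenvalue functions coincide: for every x ∈ ℂ∖{z_1,…,z_n},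 E_2(x; t⁰, z, μ, ν) = E_2(x; t̃⁰, z, −μ, −ν), where E_2(x; t, z, μ, ν) = (2πi)²·[ −(μ+ν/2)²/4 + Σ_{s=1}^n ( (m_s(m_s+2)/4 + k_s(t,z,μ,ν))/(1 − x/z_s) − (m_s(m_s+2)/4)/(1 − x/z_s)² ) ]. Equivalently, the conjugated fundamental differential operators ℰ^c of the two solutions coincide. -/
open Complex Finset

namespace Paper

noncomputable section

variable {n : ℕ}

variable (m : Fin n → ℕ)

/-!
Evaluating the Wronskian relation `(μ - ν/2) y ỹ + X (y ỹ' - y' ỹ) = (μ + ν/2) ∏ (X - z_s)^{m_s}`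
at a root `z_s` of the right-hand side gives
`μ - ν/2 + z_s (Σ_j 1/(z_s - t̃_j) - Σ_i 1/(z_s - t_i)) = 0`, which is exactly the statement that
`k_s(t⁰, z, μ, ν) = k_s(t̃⁰, z, -μ, -ν)`. Since `(-μ - ν/2)² = (μ + ν/2)²`, the two eigenvalue
functions `E₂` then agree term by term.
-/

section Field

open Polynomial

variable {K : Type*} [Field K]

theorem eval_derivative_prod_X_sub_C {ι : Type*} (s : Finset ι) (a : ι → K) {w : K}
    (hw : ∀ i ∈ s, w ≠ a i) :
    (derivative (∏ i ∈ s, (X - C (a i)))).eval w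
      = (∏ i ∈ s, (w - a i)) * ∑ i ∈ s, (w - a i)⁻¹ := by
  classical
  rw [derivative_prod_finset, eval_finsetSum, Finset.mul_sum]
  refine Finset.sum_congr rfl fun i hi => ?_
  have hwi : w - a i ≠ 0 := sub_ne_zero.mpr (hw i hi)
  simp only [eval_prod, derivative_X_sub_C, eval_sub, eval_X, eval_C, mul_one]
  rw [← Finset.prod_erase_mul _ _ hi]
  field_simp

theorem sum_div_sub_eq_neg_mul_sum_inv {ι : Type*} (s : Finset ι) (a : ι → K) {w : K}
    (ha : ∀ i ∈ s, a i ≠ w) :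
    ∑ i ∈ s, w / (a i - w) = -w * ∑ i ∈ s, (w - a i)⁻¹ := by
  rw [Finset.mul_sum]
  refine Finset.sum_congr rfl fun i hi => ?_
  have : w - a i ≠ 0 := sub_ne_zero.mpr (ha i hi).symm
  rw [show a i - w = -(w - a i) by ring]
  field_simp

theorem add_mul_logDeriv_sub_eq_zero_of_wronskian {c d w : K} {p q R : K[X]}
    (h : C c * (p * q) + X * (p * derivative q - derivative p * q) = C d * R)
    (hR : R.eval w = 0) (hp : p.eval w ≠ 0) (hq : q.eval w ≠ 0) :
    c + w * ((derivative q).eval w / q.eval w - (derivative p).eval w / p.eval w) = 0 := by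
  have hw := congrArg (eval w) h
  simp only [eval_add, eval_mul, eval_sub, eval_C, eval_X, hR, mul_zero] at hw
  field_simp
  linear_combination hw

theorem add_mul_sum_inv_sub_eq_zero_of_wronskian {k l : ℕ} (a : Fin k → K) (b : Fin l → K)
    {c d w : K} {R : K[X]}
    (h : C c * ((∏ i, (X - C (a i))) * ∏ j, (X - C (b j)))
          + X * ((∏ i, (X - C (a i))) * derivative (∏ j, (X - C (b j)))
              - derivative (∏ i, (X - C (a i))) * ∏ j, (X - C (b j)))
        = C d * R)
    (hR : R.eval w = 0) (ha : ∀ i, w ≠ a i) (hb : ∀ j, w ≠ b j) :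
    c + w * (∑ j, (w - b j)⁻¹ - ∑ i, (w - a i)⁻¹) = 0 := by
  have heval {r : ℕ} (e : Fin r → K) : (∏ i, (X - C (e i))).eval w = ∏ i, (w - e i) := by
    simp only [eval_prod, eval_sub, eval_X, eval_C]
  have hprod {r : ℕ} (e : Fin r → K) (he : ∀ i, w ≠ e i) : ∏ i, (w - e i) ≠ 0 :=
    Finset.prod_ne_zero_iff.mpr fun i _ => sub_ne_zero.mpr (he i)
  have hrel := add_mul_logDeriv_sub_eq_zero_of_wronskian h hR
    (heval a ▸ hprod a ha) (heval b ▸ hprod b hb)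
  rwa [eval_derivative_prod_X_sub_C _ _ fun i _ => ha i,
    eval_derivative_prod_X_sub_C _ _ fun j _ => hb j, heval, heval,
    mul_div_cancel_left₀ _ (hprod a ha), mul_div_cancel_left₀ _ (hprod b hb)] at hrel

end Field

section Eigenvalues

variable (m : Fin n → ℕ) (z : Fin n → ℂ) (μ : ℂ) {m₁ m₂ : ℕ} (t : Fin m₁ → ℂ) (t' : Fin m₂ → ℂ)

theorem kEig_eq_kEig_neg (hdim : m₁ + m₂ = ∑ s, m s) (s : Fin n)
    (ht : ∀ i, t i ≠ z s) (ht' : ∀ j, t' j ≠ z s)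
    (hrel : μ - ((∑ u, (m u : ℂ)) - 2 * m₁) / 2
      + z s * (∑ j, (z s - t' j)⁻¹ - ∑ i, (z s - t i)⁻¹) = 0) :
    kEig m z μ t s = kEig m z (-μ) t' s := by
  have hdim' : (m₁ : ℂ) + m₂ = ∑ u, (m u : ℂ) := by exact_mod_cast hdim
  simp only [kEig]
  rw [sum_div_sub_eq_neg_mul_sum_inv _ t fun i _ => ht i,
    sum_div_sub_eq_neg_mul_sum_inv _ t' fun j _ => ht' j, ← hdim']
  rw [← hdim'] at hrel
  linear_combination (m s : ℂ) * hrel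

theorem E2fun_eq_E2fun_neg (hdim : m₁ + m₂ = ∑ s, m s)
    (hk : ∀ s, kEig m z μ t s = kEig m z (-μ) t' s) (x : ℂ) :
    E2fun m z μ t x = E2fun m z (-μ) t' x := by
  have hdim' : (m₁ : ℂ) + m₂ = ∑ u, (m u : ℂ) := by exact_mod_cast hdim
  simp only [E2fun, hk, ← hdim']
  ring

end Eigenvalues

open Polynomial in
theorem statement15_general
    (n : ℕ) (m : Fin n → ℕ) (hm : ∀ s, 0 < m s)
    (M : ℕ) (hM : M = ∑ s, m s)
    (z : Fin n → ℂ)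
    (μ : ℂ) (m' : ℕ) (hm' : m' ≤ M) (ν : ℂ) (hν : ν = (M : ℂ) - 2 * (m' : ℂ))
    (t : Fin m' → ℂ) (ht : BAE m z μ t)
    (tt : Fin (M - m') → ℂ)
    (httz : ∀ i s, tt i ≠ z s)
    (hid : C (μ - ν / 2) * ((∏ i, (X - C (t i))) * ∏ i, (X - C (tt i)))
          + X * ((∏ i, (X - C (t i))) * derivative (∏ i, (X - C (tt i)))
              - derivative (∏ i, (X - C (t i))) * ∏ i, (X - C (tt i)))
        = C (μ + ν / 2) * ∏ s, (X - C (z s)) ^ (m s)) :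
    ∀ x : ℂ, (∀ s, x ≠ z s) → E2fun m z μ t x = E2fun m z (-μ) tt x := by
  have hdim : m' + (M - m') = ∑ s, m s := by omega
  intro x _
  refine E2fun_eq_E2fun_neg m z μ t tt hdim (fun s => ?_) x
  have hroot : (∏ p, (X - C (z p)) ^ (m p)).eval (z s) = 0 := by
    simp only [eval_prod, eval_pow, eval_sub, eval_X, eval_C]
    exact Finset.prod_eq_zero (Finset.mem_univ s) (by simp [(hm s).ne'])
  have hrel := add_mul_sum_inv_sub_eq_zero_of_wronskian t tt hid hroot
    (fun i => (ht.2.2.1 i s).symm) (fun j => (httz j s).symm)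
  refine kEig_eq_kEig_neg m z μ t tt hdim s (fun i => ht.2.2.1 i s) (fun j => httz j s) ?_
  have hMc : (M : ℂ) = ∑ u, (m u : ℂ) := by rw [hM]; push_cast; rfl
  rwa [hν, hMc] at hrel

open Polynomial in
/-- Lemma 8.3 of the paper.  Under the hypotheses of Lemma 7.4 (so that
`t̃⁰` solves the Bethe ansatz equations for `(z; -μ; V[-ν])`), the eigenvalue functions of
the two solutions coincide: `E₂(x; t⁰, z, μ, ν) = E₂(x; t̃⁰, z, -μ, -ν)` for every
`x ∈ ℂ∖{z_1,…,z_n}`; equivalently, the conjugated fundamental differential operators `ℰᶜ`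
of the two solutions coincide. -/
theorem statement15
    (n : ℕ) (hn : 1 < n) (m : Fin n → ℕ) (hm : ∀ s, 0 < m s)
    (M : ℕ) (hM : M = ∑ s, m s)
    (z : Fin n → ℂ) (hz0 : ∀ s, z s ≠ 0) (hz : Function.Injective z)
    (μ : ℂ) (m' : ℕ) (hm' : m' ≤ M) (ν : ℂ) (hν : ν = (M : ℂ) - 2 * (m' : ℂ))
    (hμ : ∀ k : ℕ, μ ≠ ν / 2 + (k : ℂ))
    (t : Fin m' → ℂ) (ht : BAE m z μ t)
    (tt : Fin (M - m') → ℂ) (httinj : Function.Injective tt)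
    (httz : ∀ i s, tt i ≠ z s)
    (hid : C (μ - ν / 2) * ((∏ i, (X - C (t i))) * ∏ i, (X - C (tt i)))
          + X * ((∏ i, (X - C (t i))) * derivative (∏ i, (X - C (tt i)))
              - derivative (∏ i, (X - C (t i))) * ∏ i, (X - C (tt i)))
        = C (μ + ν / 2) * ∏ s, (X - C (z s)) ^ (m s)) :
    ∀ x : ℂ, (∀ s, x ≠ z s) → E2fun m z μ t x = E2fun m z (-μ) tt x :=
  statement15_general n m hm M hM z μ m' hm' ν hν t ht tt httz hid

end
end Paper
end
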